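/- arXiv:1702.00121 — 6 statements merged into one kernel-verified Lean document; each statement's English description precedes it below -/
import Mathlib

section
/- Let ℓ be an odd prime, let G be a subgroup of GL₂(ℤ/ℓℤ), let H be a twist of G, and let M be one of Z(ℓ), C_s(ℓ), C_ns(ℓ), N_s(ℓ), N_ns(ℓ). Then G belongs to M if and only if H belongs to M. -/
/-! Each of `Z`, `C_s`, `C_ns`, `N_s`, `N_ns` is stable under `g ↦ -g`, so `G` is conjugate into
one of them iff `⟨G, -I⟩` is. And a twist `H` of `G` satisfies `⟨H, -I⟩ = ⟨G, -I⟩`: either `H` is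
`⟨G, -I⟩` itself, or `H` has index 2 in `⟨G, -I⟩` and misses `-I`, and a subgroup of index 2
together with any element outside it generates everything. -/

open Matrix

abbrev GL2 (ℓ : ℕ) : Type := GL (Fin 2) (ZMod ℓ)

namespace Paper

/-- The underlying matrix of an element of `GL₂(ℤ/ℓℤ)`. -/
def mat {ℓ : ℕ} (g : GL2 ℓ) : Matrix (Fin 2) (Fin 2) (ZMod ℓ) := ↑g

/-- The set of scalar matrices `Z(ℓ)`. -/
def ZSet (ℓ : ℕ) : Set (GL2 ℓ) :=
  { g | ∃ x : ZMod ℓ, mat g = x • (1 : Matrix (Fin 2) (Fin 2) (ZMod ℓ)) }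

/-- The split Cartan `C_s(ℓ)`: invertible diagonal matrices. -/
def CsSet (ℓ : ℕ) : Set (GL2 ℓ) := { g | mat g 0 1 = 0 ∧ mat g 1 0 = 0 }

/-- The normalizer `N_s(ℓ)` of the split Cartan: diagonal and antidiagonal matrices. -/
def NsSet (ℓ : ℕ) : Set (GL2 ℓ) :=
  CsSet ℓ ∪ { g | mat g 0 0 = 0 ∧ mat g 1 1 = 0 }

/-- The nonsplit Cartan `C_ns(ℓ)` relative to the nonsquare `ε`. -/
def CnsSet (ℓ : ℕ) (ε : ZMod ℓ) : Set (GL2 ℓ) :=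
  { g | ∃ x y : ZMod ℓ, mat g = !![x, ε * y; y, x] }

/-- The normalizer `N_ns(ℓ)` of the nonsplit Cartan. -/
def NnsSet (ℓ : ℕ) (ε : ZMod ℓ) : Set (GL2 ℓ) :=
  CnsSet ℓ ε ∪ { g | ∃ x y : ZMod ℓ, mat g = !![x, -(ε * y); y, -x] }

/-- The ramified Cartan `C_r(ℓ)`. -/
def CrSet (ℓ : ℕ) : Set (GL2 ℓ) :=
  { g | mat g 1 0 = 0 ∧ mat g 0 0 = mat g 1 1 }

/-- The Borel subgroup `B(ℓ)`: upper triangular matrices. -/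
def BorelSet (ℓ : ℕ) : Set (GL2 ℓ) := { g | mat g 1 0 = 0 }

/-- `G` is conjugate in `GL₂(ℤ/ℓℤ)` to a subgroup of the set `M`. -/
def ConjSub {ℓ : ℕ} (G : Subgroup (GL2 ℓ)) (M : Set (GL2 ℓ)) : Prop :=
  ∃ a : GL2 ℓ, ∀ g ∈ G, a * g * a⁻¹ ∈ M

/-- `G` belongs to `Z(ℓ)`. -/
def BelongsZ {ℓ : ℕ} (G : Subgroup (GL2 ℓ)) : Prop := ConjSub G (ZSet ℓ)

/-- `G` belongs to `C_s(ℓ)`. -/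
def BelongsCs {ℓ : ℕ} (G : Subgroup (GL2 ℓ)) : Prop :=
  ConjSub G (CsSet ℓ) ∧ ¬ ConjSub G (ZSet ℓ)

/-- `G` belongs to `C_ns(ℓ)`. -/
def BelongsCns {ℓ : ℕ} (ε : ZMod ℓ) (G : Subgroup (GL2 ℓ)) : Prop :=
  ConjSub G (CnsSet ℓ ε) ∧ ¬ ConjSub G (ZSet ℓ)

/-- `G` belongs to `N_s(ℓ)`. -/
def BelongsNs {ℓ : ℕ} (G : Subgroup (GL2 ℓ)) : Prop :=
  ConjSub G (NsSet ℓ) ∧ ¬ ConjSub G (CsSet ℓ)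

/-- `G` belongs to `N_ns(ℓ)`. -/
def BelongsNns {ℓ : ℕ} (ε : ZMod ℓ) (G : Subgroup (GL2 ℓ)) : Prop :=
  ConjSub G (NnsSet ℓ ε) ∧ ¬ ConjSub G (CnsSet ℓ ε)

/-- `G` belongs to the ramified Cartan `C_r(ℓ)`. -/
def BelongsCr {ℓ : ℕ} (G : Subgroup (GL2 ℓ)) : Prop :=
  ConjSub G (CrSet ℓ) ∧ ¬ ConjSub G (ZSet ℓ)

/-- `H` is a twist of `G`: either `H = ⟨G, -I⟩`, or `H` is an index-2 subgroup of
`⟨G, -I⟩` not containing `-I`. -/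
def TwistOf {ℓ : ℕ} (G H : Subgroup (GL2 ℓ)) : Prop :=
  H = G ⊔ Subgroup.closure {(-1 : GL2 ℓ)} ∨
    (H ≤ G ⊔ Subgroup.closure {(-1 : GL2 ℓ)} ∧
      H.relIndex (G ⊔ Subgroup.closure {(-1 : GL2 ℓ)}) = 2 ∧
      (-1 : GL2 ℓ) ∉ H)

/-- `H` fixes a nonzero vector of `(ℤ/ℓℤ)²`. -/
def FixesVec {ℓ : ℕ} (H : Subgroup (GL2 ℓ)) : Prop :=
  ∃ v : Fin 2 → ZMod ℓ, v ≠ 0 ∧ ∀ h ∈ H, Matrix.mulVec (mat h) v = v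

end Paper

namespace Subgroup

theorem sup_eq_of_relIndex_eq_two {G : Type*} [Group G] {H K N : Subgroup G} (hHK : H ≤ K)
    (hNK : N ≤ K) (hidx : H.relIndex K = 2) (hNH : ¬N ≤ H) : H ⊔ N = K := by
  have hsup : H ⊔ N ≤ K := sup_le hHK hNK
  have hmul := relIndex_mul_relIndex H (H ⊔ N) K le_sup_left hsup
  rw [hidx] at hmul
  have hbot : H.relIndex (H ⊔ N) ≠ 1 := fun h ↦ hNH (le_sup_right.trans (relIndex_eq_one.1 h))
  have htop : (H ⊔ N).relIndex K = 1 := by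
    rcases (Nat.dvd_prime Nat.prime_two).1 (Dvd.intro_left _ hmul) with h | h
    · exact h
    · rw [h] at hmul
      omega
  exact le_antisymm hsup (relIndex_eq_one.1 htop)

variable {n R : Type*} [Fintype n] [DecidableEq n] [Ring R]

theorem sup_closure_neg_one_eq_adjoinNegOne (G : Subgroup (GL n R)) :
    G ⊔ closure {(-1 : GL n R)} = G.adjoinNegOne := by
  refine le_antisymm (sup_le G.le_adjoinNegOne ?_) ?_
  · exact (closure_le _).2 (Set.singleton_subset_iff.2 G.negOne_mem_adjoinNegOne)
  · rintro g (hg | hg)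
    · exact mem_sup_left hg
    · simpa using mul_mem_sup hg (mem_closure_singleton_self (-1 : GL n R))

end Subgroup

namespace Paper

theorem mat_neg {ℓ : ℕ} (g : GL2 ℓ) : mat (-g) = -mat g := Units.val_neg g

theorem neg_mem_ZSet {ℓ : ℕ} {g : GL2 ℓ} (hg : g ∈ ZSet ℓ) : -g ∈ ZSet ℓ := by
  obtain ⟨x, hx⟩ := hg
  exact ⟨-x, by rw [mat_neg, hx, neg_smul]⟩

theorem neg_mem_CsSet {ℓ : ℕ} {g : GL2 ℓ} (hg : g ∈ CsSet ℓ) : -g ∈ CsSet ℓ := by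
  obtain ⟨h01, h10⟩ := hg
  exact ⟨by simp [mat_neg, h01], by simp [mat_neg, h10]⟩

theorem neg_mem_NsSet {ℓ : ℕ} {g : GL2 ℓ} (hg : g ∈ NsSet ℓ) : -g ∈ NsSet ℓ := by
  rcases hg with hg | ⟨h00, h11⟩
  · exact Or.inl (neg_mem_CsSet hg)
  · exact Or.inr ⟨by simp [mat_neg, h00], by simp [mat_neg, h11]⟩

theorem neg_mem_CnsSet {ℓ : ℕ} {ε : ZMod ℓ} {g : GL2 ℓ} (hg : g ∈ CnsSet ℓ ε) :
    -g ∈ CnsSet ℓ ε := by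
  obtain ⟨x, y, hxy⟩ := hg
  exact ⟨-x, -y, by rw [mat_neg, hxy]; ext i j; fin_cases i <;> fin_cases j <;> simp⟩

theorem neg_mem_NnsSet {ℓ : ℕ} {ε : ZMod ℓ} {g : GL2 ℓ} (hg : g ∈ NnsSet ℓ ε) :
    -g ∈ NnsSet ℓ ε := by
  rcases hg with hg | ⟨x, y, hxy⟩
  · exact Or.inl (neg_mem_CnsSet hg)
  · exact Or.inr ⟨-x, -y, by rw [mat_neg, hxy]; ext i j; fin_cases i <;> fin_cases j <;> simp⟩

theorem TwistOf.adjoinNegOne_eq {ℓ : ℕ} {G H : Subgroup (GL2 ℓ)} (hGH : TwistOf G H) :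
    H.adjoinNegOne = G.adjoinNegOne := by
  rw [TwistOf, G.sup_closure_neg_one_eq_adjoinNegOne] at hGH
  rcases hGH with rfl | ⟨hle, hidx, hneg⟩
  · exact Subgroup.adjoinNegOne_eq_self_iff.2 G.negOne_mem_adjoinNegOne
  · rw [← H.sup_closure_neg_one_eq_adjoinNegOne]
    refine Subgroup.sup_eq_of_relIndex_eq_two hle ?_ hidx
      fun h ↦ hneg (h (Subgroup.mem_closure_singleton_self _))
    exact G.sup_closure_neg_one_eq_adjoinNegOne ▸ le_sup_right

theorem conjSub_adjoinNegOne_iff {ℓ : ℕ} {G : Subgroup (GL2 ℓ)} {M : Set (GL2 ℓ)}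
    (hM : ∀ g ∈ M, -g ∈ M) : ConjSub G.adjoinNegOne M ↔ ConjSub G M := by
  refine ⟨fun ⟨a, ha⟩ ↦ ⟨a, fun g hg ↦ ha g (G.le_adjoinNegOne hg)⟩, fun ⟨a, ha⟩ ↦ ⟨a, ?_⟩⟩
  rintro g (hg | hg)
  · exact ha g hg
  · simpa using hM _ (ha _ hg)

theorem TwistOf.conjSub_iff {ℓ : ℕ} {G H : Subgroup (GL2 ℓ)} (hGH : TwistOf G H)
    {M : Set (GL2 ℓ)} (hM : ∀ g ∈ M, -g ∈ M) : ConjSub G M ↔ ConjSub H M := by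
  rw [← conjSub_adjoinNegOne_iff hM, ← hGH.adjoinNegOne_eq, conjSub_adjoinNegOne_iff hM]

end Paper

theorem statement_0_general (ℓ : ℕ) (ε : ZMod ℓ) (G H : Subgroup (GL2 ℓ)) (hGH : Paper.TwistOf G H) :
    (Paper.BelongsZ G ↔ Paper.BelongsZ H) ∧
    (Paper.BelongsCs G ↔ Paper.BelongsCs H) ∧
    (Paper.BelongsCns ε G ↔ Paper.BelongsCns ε H) ∧
    (Paper.BelongsNs G ↔ Paper.BelongsNs H) ∧
    (Paper.BelongsNns ε G ↔ Paper.BelongsNns ε H) := by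
  have hZ := hGH.conjSub_iff fun _ ↦ Paper.neg_mem_ZSet
  have hCs := hGH.conjSub_iff fun _ ↦ Paper.neg_mem_CsSet
  have hCns := hGH.conjSub_iff fun _ ↦ Paper.neg_mem_CnsSet (ε := ε)
  have hNs := hGH.conjSub_iff fun _ ↦ Paper.neg_mem_NsSet
  have hNns := hGH.conjSub_iff fun _ ↦ Paper.neg_mem_NnsSet (ε := ε)
  exact ⟨hZ, and_congr hCs (not_congr hZ), and_congr hCns (not_congr hZ),
    and_congr hNs (not_congr hCs), and_congr hNns (not_congr hCns)⟩

theorem statement_0 (ℓ : ℕ) (hℓ : Nat.Prime ℓ) (hodd : Odd ℓ) (ε : ZMod ℓ)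
    (hε : ∀ t : ZMod ℓ, t ^ 2 ≠ ε) (G H : Subgroup (GL2 ℓ)) (hGH : Paper.TwistOf G H) :
    (Paper.BelongsZ G ↔ Paper.BelongsZ H) ∧
    (Paper.BelongsCs G ↔ Paper.BelongsCs H) ∧
    (Paper.BelongsCns ε G ↔ Paper.BelongsCns ε H) ∧
    (Paper.BelongsNs G ↔ Paper.BelongsNs H) ∧
    (Paper.BelongsNns ε G ↔ Paper.BelongsNns ε H) :=
  statement_0_general ℓ ε G H hGH
end

section
/- Let ℓ be an odd prime. The set of indices [GL₂(ℤ/ℓℤ) : G] over subgroups G of GL₂(ℤ/ℓℤ) that belong to the ramified Cartan subgroup C_r(ℓ) equals the set of positive integers divisible by ℓ² − 1 and dividing (ℓ+1)(ℓ−1)². -/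
open Matrix

/-!
Conjugating, we may assume `G ≤ C_r(ℓ)`, and `(u, b) ↦ [[u, u b], [0, u]]` identifies `C_r(ℓ)` with
`F^× × F` for `F = ℤ/ℓℤ`; since `|C_r(ℓ)| = ℓ(ℓ - 1)`, its index in `GL₂(ℓ)` is `ℓ² - 1`. If `G`
is not scalar it contains some `(u, b)` with `b ≠ 0`, whose `(ℓ - 1)`-th power `(1, -b)` generates
`F`, of prime order `ℓ`. Hence `G ⊇ F` and `[C_r(ℓ) : G] = [F^× : pr₁ G]` divides `ℓ - 1`.
Conversely, `A × F` for a subgroup `A` of index `k` of the cyclic group `F^×` has index `(ℓ² - 1) k`.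
-/

section GroupTheory

variable {A B : Type*} [Group A] [Group B]

theorem IsCyclic.exists_index_eq [IsCyclic A] [Finite A] {k : ℕ} (hk : k ∣ Nat.card A) :
    ∃ H : Subgroup A, H.index = k := by
  obtain ⟨g, hg⟩ := IsCyclic.exists_ofOrder_eq_natCard (α := A)
  have hk0 : k ≠ 0 := by rintro rfl; exact Nat.card_pos.ne' (zero_dvd_iff.mp hk)
  refine ⟨Subgroup.zpowers (g ^ k), ?_⟩
  have hcard : Nat.card (Subgroup.zpowers (g ^ k)) = Nat.card A / k := by
    rw [Nat.card_zpowers, orderOf_pow_of_dvd hk0 (hg ▸ hk), hg]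
  have hmul := (Subgroup.zpowers (g ^ k)).index_mul_card
  rw [hcard] at hmul
  exact Nat.eq_of_mul_eq_mul_right
    (Nat.div_pos (Nat.le_of_dvd Nat.card_pos hk) (Nat.pos_of_ne_zero hk0))
    (hmul.trans (Nat.mul_div_cancel' hk).symm)

/-- `P` contains `⊥ × B`, which is generated by the `B`-component of `x ^ |A|`, so its index is that
of its image in `A`. -/
theorem Subgroup.index_dvd_card_of_exists_snd_ne_one {p : ℕ} [Fact p.Prime] [Finite A]
    (hB : Nat.card B = p) (hA : (Nat.card A).Coprime p) {P : Subgroup (A × B)}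
    (hP : ∃ x ∈ P, x.2 ≠ 1) : P.index ∣ Nat.card A := by
  obtain ⟨x, hxP, hx⟩ := hP
  set y := x ^ Nat.card A
  have hy1 : y.1 = 1 := by rw [Prod.pow_fst, pow_card_eq_one']
  have hy2 : y.2 ≠ 1 := by
    have hord : orderOf x.2 = p := orderOf_eq_prime (hB ▸ pow_card_eq_one') hx
    rw [Prod.pow_snd, Ne, ← orderOf_dvd_iff_pow_eq_one, hord]
    exact (Nat.Prime.coprime_iff_not_dvd Fact.out).mp hA.symm
  have hker : (MonoidHom.fst A B).ker ≤ P := by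
    intro z hz
    rw [MonoidHom.ker_fst, Subgroup.mem_prod, Subgroup.mem_bot] at hz
    obtain ⟨n, hn⟩ := Subgroup.mem_zpowers_iff.mp
      (zpowers_eq_top_of_prime_card hB hy2 ▸ Subgroup.mem_top z.2)
    have hyz : y ^ n = z :=
      Prod.ext (by rw [Prod.pow_fst, hy1, _root_.one_zpow, hz.1]) (by rw [Prod.pow_snd, hn])
    exact hyz ▸ P.zpow_mem (P.pow_mem hxP _) n
  rw [← Subgroup.index_map_eq _ Prod.fst_surjective hker]
  exact Subgroup.index_dvd_card _

end GroupTheory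

section RamifiedCartan

variable {R : Type*} [CommRing R]

def crMatrix (u b : R) : Matrix (Fin 2) (Fin 2) R := !![u, u * b; 0, u]

theorem crMatrix_mul (u b v c : R) :
    crMatrix u b * crMatrix v c = crMatrix (u * v) (b + c) := by
  ext i j
  fin_cases i <;> fin_cases j <;> simp [crMatrix, Matrix.mul_apply]
  ring

theorem crMatrix_one_zero : crMatrix (1 : R) 0 = 1 := by
  rw [crMatrix, Matrix.one_fin_two, one_mul]

variable (R) in
def crEmbedding : Rˣ × Multiplicative R →* GL (Fin 2) R where
  toFun p := ⟨crMatrix (p.1 : R) p.2.toAdd, crMatrix ↑p.1⁻¹ (-p.2.toAdd),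
    by rw [crMatrix_mul, Units.mul_inv, add_neg_cancel, crMatrix_one_zero],
    by rw [crMatrix_mul, Units.inv_mul, neg_add_cancel, crMatrix_one_zero]⟩
  map_one' := Units.ext crMatrix_one_zero
  map_mul' p q := Units.ext (crMatrix_mul _ _ _ _).symm

theorem crEmbedding_apply_val (p : Rˣ × Multiplicative R) :
    (crEmbedding R p : Matrix (Fin 2) (Fin 2) R) = crMatrix (p.1 : R) p.2.toAdd := rfl

theorem crEmbedding_injective : Function.Injective (crEmbedding R) := by
  intro p q h
  have h00 := congrArg (fun g : GL (Fin 2) R => (g : Matrix (Fin 2) (Fin 2) R) 0 0) h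
  have h01 := congrArg (fun g : GL (Fin 2) R => (g : Matrix (Fin 2) (Fin 2) R) 0 1) h
  simp only [crEmbedding_apply_val, crMatrix, Matrix.of_apply, Matrix.cons_val',
    Matrix.cons_val_zero, Matrix.cons_val_one, Matrix.empty_val', Matrix.cons_val_fin_one] at h00 h01
  have hu : p.1 = q.1 := Units.ext h00
  rw [h00] at h01
  exact Prod.ext hu (Multiplicative.toAdd.injective (q.1.isUnit.mul_left_cancel h01))

end RamifiedCartan

namespace Paper

section

variable {n : ℕ}

theorem mem_CrSet_iff {g : GL2 n} : g ∈ CrSet n ↔ g ∈ (crEmbedding (ZMod n)).range := by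
  constructor
  · rintro ⟨h10, hdiag⟩
    have hdet : (mat g).det = mat g 0 0 ^ 2 := by rw [Matrix.det_fin_two, h10, ← hdiag]; ring
    obtain ⟨u, hu⟩ := (isUnit_pow_iff two_ne_zero).mp
      (hdet ▸ (Matrix.isUnit_iff_isUnit_det _).mp g.isUnit)
    refine ⟨(u, Multiplicative.ofAdd (↑u⁻¹ * mat g 0 1)), Units.ext ?_⟩
    change crMatrix (u : ZMod n) (↑u⁻¹ * mat g 0 1) = mat g
    conv_rhs => rw [Matrix.eta_fin_two (mat g)]
    rw [crMatrix, h10, ← hdiag, ← hu, Units.mul_inv_cancel_left]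
  · rintro ⟨p, rfl⟩
    exact ⟨rfl, rfl⟩

theorem crEmbedding_mem_ZSet_iff {p : (ZMod n)ˣ × Multiplicative (ZMod n)} :
    crEmbedding (ZMod n) p ∈ ZSet n ↔ p.2 = 1 := by
  constructor
  · rintro ⟨x, hx⟩
    simpa [mat, crEmbedding_apply_val, crMatrix] using congrFun (congrFun hx 0) 1
  · intro h
    refine ⟨p.1, ?_⟩
    ext i j
    fin_cases i <;> fin_cases j <;> simp [mat, crEmbedding_apply_val, crMatrix, h]

theorem mem_ZSet_of_conj_mem {a g : GL2 n} (h : a * g * a⁻¹ ∈ ZSet n) : g ∈ ZSet n := by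
  obtain ⟨x, hx⟩ := h
  refine ⟨x, ?_⟩
  change mat a * mat g * mat a⁻¹ = x • 1 at hx
  calc mat g = mat a⁻¹ * (mat a * mat g * mat a⁻¹) * mat a := by simp [mat, mul_assoc]
    _ = x • 1 := by rw [hx, Matrix.mul_smul, mul_one, Matrix.smul_mul]; simp [mat]

end

section

variable {ℓ : ℕ} [Fact ℓ.Prime]

theorem card_GL2 : Nat.card (GL2 ℓ) = (ℓ ^ 2 - 1) * (ℓ ^ 2 - ℓ) := by
  rw [Matrix.card_GL_field, Fin.prod_univ_two, ZMod.card]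
  simp

theorem index_range_crEmbedding : (crEmbedding (ZMod ℓ)).range.index = ℓ ^ 2 - 1 := by
  have hℓ : ℓ.Prime := Fact.out
  have hmul := (crEmbedding (ZMod ℓ)).range.index_mul_card
  rw [← Nat.card_congr (MonoidHom.ofInjective crEmbedding_injective).toEquiv, Nat.card_prod,
    Nat.card_units, Nat.card_congr Multiplicative.toAdd, Nat.card_zmod, card_GL2,
    show ℓ ^ 2 - ℓ = (ℓ - 1) * ℓ by rw [sq, Nat.sub_one_mul]] at hmul
  exact Nat.eq_of_mul_eq_mul_right (Nat.mul_pos (Nat.sub_pos_of_lt hℓ.one_lt) hℓ.pos) hmul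

theorem index_map_crEmbedding (P : Subgroup ((ZMod ℓ)ˣ × Multiplicative (ZMod ℓ))) :
    (P.map (crEmbedding (ZMod ℓ))).index = (ℓ ^ 2 - 1) * P.index := by
  rw [P.index_map_of_injective crEmbedding_injective, index_range_crEmbedding, mul_comm]

theorem BelongsCr.exists_index_eq {G : Subgroup (GL2 ℓ)} (hG : BelongsCr G) :
    ∃ k, k ∣ ℓ - 1 ∧ G.index = (ℓ ^ 2 - 1) * k := by
  have hℓ : ℓ.Prime := Fact.out
  obtain ⟨⟨a, ha⟩, hZ⟩ := hG
  set G' := G.map (MulAut.conj a : GL2 ℓ →* GL2 ℓ)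
  have hG' : G' ≤ (crEmbedding (ZMod ℓ)).range := by
    rintro _ ⟨g, hg, rfl⟩
    exact mem_CrSet_iff.mp (ha g hg)
  set P := G'.comap (crEmbedding (ZMod ℓ))
  have hP : ∃ x ∈ P, x.2 ≠ 1 := by
    by_contra! hP
    refine hZ ⟨a, fun g hg => ?_⟩
    obtain ⟨p, hp⟩ := hG' (Subgroup.mem_map_of_mem _ hg)
    have hpP : p ∈ P := by rw [Subgroup.mem_comap, hp]; exact Subgroup.mem_map_of_mem _ hg
    rw [show a * g * a⁻¹ = _ from hp.symm]
    exact crEmbedding_mem_ZSet_iff.mpr (hP p hpP)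
  refine ⟨P.index, ?_, ?_⟩
  · have := Subgroup.index_dvd_card_of_exists_snd_ne_one
      (Nat.card_congr Multiplicative.toAdd |>.trans (Nat.card_zmod ℓ))
      (by rw [Nat.card_units, Nat.card_zmod]
          exact (Nat.coprime_self_sub_left hℓ.one_le).mpr (Nat.coprime_one_left ℓ)) hP
    rwa [Nat.card_units, Nat.card_zmod] at this
  · rw [← Subgroup.index_map_equiv G (MulAut.conj a), ← index_map_crEmbedding,
      Subgroup.map_comap_eq_self hG']

theorem exists_belongsCr_index_eq {k : ℕ} (hk : k ∣ ℓ - 1) :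
    ∃ G : Subgroup (GL2 ℓ), BelongsCr G ∧ G.index = (ℓ ^ 2 - 1) * k := by
  obtain ⟨A, hA⟩ := IsCyclic.exists_index_eq (A := (ZMod ℓ)ˣ) (k := k)
    (by rwa [Nat.card_units, Nat.card_zmod])
  refine ⟨(A.prod ⊤).map (crEmbedding (ZMod ℓ)), ⟨⟨1, ?_⟩, ?_⟩, ?_⟩
  · rintro _ ⟨p, -, rfl⟩
    simpa using mem_CrSet_iff.mpr ⟨p, rfl⟩
  · rintro ⟨a, ha⟩
    have hmem : crEmbedding (ZMod ℓ) (1, Multiplicative.ofAdd 1) ∈ (A.prod ⊤).map _ :=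
      Subgroup.mem_map_of_mem _ ⟨A.one_mem, Subgroup.mem_top _⟩
    have := crEmbedding_mem_ZSet_iff.mp (mem_ZSet_of_conj_mem (ha _ hmem))
    exact one_ne_zero (Multiplicative.ofAdd.injective this)
  · rw [index_map_crEmbedding, Subgroup.index_prod, Subgroup.index_top, mul_one, hA]

end

end Paper

theorem Nat.exists_dvd_eq_mul_iff {m d n : ℕ} (hm : 0 < m) (hd : 0 < d) :
    (∃ k, k ∣ d ∧ n = m * k) ↔ 0 < n ∧ m ∣ n ∧ n ∣ m * d := by
  constructor
  · rintro ⟨k, hk, rfl⟩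
    exact ⟨Nat.mul_pos hm (Nat.pos_of_dvd_of_pos hk hd), dvd_mul_right m k,
      Nat.mul_dvd_mul_left m hk⟩
  · rintro ⟨-, ⟨k, rfl⟩, hdvd⟩
    exact ⟨k, Nat.dvd_of_mul_dvd_mul_left hm hdvd, rfl⟩

theorem statement_1_general (ℓ : ℕ) (hℓ : Nat.Prime ℓ) :
    { n : ℕ | ∃ G : Subgroup (GL2 ℓ), Paper.BelongsCr G ∧ G.index = n } =
      { n : ℕ | 0 < n ∧ (ℓ ^ 2 - 1) ∣ n ∧ n ∣ (ℓ + 1) * (ℓ - 1) ^ 2 } := by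
  have := Fact.mk hℓ
  have hℓ1 : 0 < ℓ - 1 := Nat.sub_pos_of_lt hℓ.one_lt
  have hsq : ℓ ^ 2 - 1 = (ℓ + 1) * (ℓ - 1) := by simpa using Nat.sq_sub_sq ℓ 1
  ext n
  rw [Set.mem_ofPred_eq, Set.mem_ofPred_eq, sq (ℓ - 1), ← mul_assoc, ← hsq,
    ← Nat.exists_dvd_eq_mul_iff (hsq ▸ Nat.mul_pos ℓ.succ_pos hℓ1) hℓ1]
  constructor
  · rintro ⟨G, hG, rfl⟩
    exact hG.exists_index_eq
  · rintro ⟨k, hk, rfl⟩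
    exact Paper.exists_belongsCr_index_eq hk

theorem statement_1 (ℓ : ℕ) (hℓ : Nat.Prime ℓ) (hodd : Odd ℓ) :
    { n : ℕ | ∃ G : Subgroup (GL2 ℓ), Paper.BelongsCr G ∧ G.index = n } =
      { n : ℕ | 0 < n ∧ (ℓ ^ 2 - 1) ∣ n ∧ n ∣ (ℓ + 1) * (ℓ - 1) ^ 2 } :=
  statement_1_general ℓ hℓ
end

section
/- Let n be a positive integer and let G := (ℤ/nℤ × ℤ/nℤ) ⋊_φ ℤ/2ℤ, where the nontrivial element τ of ℤ/2ℤ acts by φ(τ)(a, b) = (b, a). Let H be a subgroup of G containing the element ((0,0), τ). Then for every positive integer m with |H| dividing m and m dividing |G|, there exists a subgroup K of G with H ≤ K ≤ G and |K| = m; that is, {|K| : H ≤ K ≤ G} is exactly the set of multiples of |H| dividing |G|. -/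
/-!
Write `G = N ⋊ ⟨τ⟩` with `N = (ℤ/nℤ)²`. A subgroup `K` containing `τ` is `B ⋊ ⟨τ⟩` for the
`τ`-stable subgroup `B = K ∩ N`, so `|K| = 2 |B|`, and conversely every `τ`-stable `B ≤ N` arises.
It therefore suffices to enlarge the `τ`-stable group `H ∩ N` to `τ`-stable subgroups of every
admissible order, one prime `p` at a time: in the abelian quotient `N / B`, Cauchy's theorem gives
`y` of order `p`, and since `τ` is an involution either `τ y = y⁻¹` or `y · τ y` is a `τ`-fixed
element of order `p`. Either way `y` or `y · τ y` generates a `τ`-stable subgroup of order `p`,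
whose preimage in `N` is `τ`-stable of order `p |B|`.
-/

/-- The order-2 automorphism of `(ℤ/nℤ)²` (written multiplicatively) swapping
the two coordinates. -/
def swapAut (n : ℕ) : MulAut (Multiplicative (ZMod n × ZMod n)) :=
  AddEquiv.toMultiplicative
    (AddEquiv.prodComm : ZMod n × ZMod n ≃+ ZMod n × ZMod n)

/-- The action `φ` of `ℤ/2ℤ` on `(ℤ/nℤ)²` in which the nontrivial element `τ` acts by
swapping the two coordinates. -/
def swapHom (n : ℕ) : Multiplicative (ZMod 2) →* MulAut (Multiplicative (ZMod n × ZMod n)) where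
  toFun t := if Multiplicative.toAdd t = 0 then 1 else swapAut n
  map_one' := by simp
  map_mul' a b := by
    have key : ∀ x : ZMod 2, x ≠ 0 → x = 1 := by decide
    have hss : swapAut n * swapAut n = 1 := by
      ext x <;> first | rfl | (simp [swapAut, MulAut.mul_apply]; done) | (simp [swapAut, MulAut.mul_apply]; rfl)
    by_cases ha : Multiplicative.toAdd a = 0 <;> by_cases hb : Multiplicative.toAdd b = 0
    · simp [toAdd_mul, ha, hb]
    · simp [toAdd_mul, ha, hb]
    · simp [toAdd_mul, ha, hb]
    · have h1 : Multiplicative.toAdd a = 1 := key _ ha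
      have h2 : Multiplicative.toAdd b = 1 := key _ hb
      have hab : Multiplicative.toAdd (a * b) = 0 := by
        rw [toAdd_mul, h1, h2]; decide
      simp [hab, ha, hb, hss]

namespace Subgroup

variable {M : Type*} [CommGroup M] {σ : M →* M}

lemma involutive_quotientMap (hσ : Function.Involutive σ) {B : Subgroup M}
    (hB : B ≤ B.comap σ) : Function.Involutive (QuotientGroup.map B B σ hB) := by
  intro q
  induction q using QuotientGroup.induction_on with
  | H a => simp only [QuotientGroup.map_mk, hσ a]

lemma card_comap_mk' [Finite M] (B : Subgroup M) (C : Subgroup (M ⧸ B)) :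
    Nat.card (C.comap (QuotientGroup.mk' B)) = Nat.card B * Nat.card C := by
  have hM := (C.comap (QuotientGroup.mk' B)).card_mul_index
  rw [C.index_comap_of_surjective (QuotientGroup.mk'_surjective B),
    B.card_eq_card_quotient_mul_card_subgroup, ← C.card_mul_index] at hM
  refine Nat.eq_of_mul_eq_mul_right (Nat.pos_of_ne_zero C.index_ne_zero_of_finite) ?_
  rw [hM]; ring

lemma exists_orderOf_eq_prime_map_mem_zpowers [Finite M] (hσ : Function.Involutive σ) {p : ℕ}
    (hp : p.Prime) (hpM : p ∣ Nat.card M) : ∃ x : M, orderOf x = p ∧ σ x ∈ zpowers x := by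
  have : Fact p.Prime := ⟨hp⟩
  obtain ⟨y, hy⟩ := exists_prime_orderOf_dvd_card' p hpM
  by_cases hfix : y * σ y = 1
  · refine ⟨y, hy, ?_⟩
    rw [eq_inv_of_mul_eq_one_right hfix]
    exact inv_mem (mem_zpowers y)
  · refine ⟨y * σ y, ?_, ?_⟩
    · have hpow : (y * σ y) ^ p = 1 := by
        rw [mul_pow, ← map_pow, ← hy, pow_orderOf_eq_one, map_one, mul_one]
      exact (hp.eq_one_or_self_of_dvd _ (orderOf_dvd_of_pow_eq_one hpow)).resolve_left
        (fun h => hfix (orderOf_eq_one_iff.mp h))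
    · rw [map_mul, hσ y, mul_comm]
      exact mem_zpowers _

lemma exists_le_comap_card_eq_mul_prime [Finite M] (hσ : Function.Involutive σ)
    {B : Subgroup M} (hB : B ≤ B.comap σ) {p : ℕ} (hp : p.Prime)
    (hdvd : Nat.card B * p ∣ Nat.card M) :
    ∃ B' : Subgroup M, B ≤ B' ∧ B' ≤ B'.comap σ ∧ Nat.card B' = Nat.card B * p := by
  have hpQ : p ∣ Nat.card (M ⧸ B) := by
    rw [B.card_eq_card_quotient_mul_card_subgroup, mul_comm (Nat.card (M ⧸ B))] at hdvd
    exact Nat.dvd_of_mul_dvd_mul_left Nat.card_pos hdvd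
  obtain ⟨x, hx, hσx⟩ :=
    exists_orderOf_eq_prime_map_mem_zpowers (involutive_quotientMap hσ hB) hp hpQ
  have hinv : zpowers x ≤ (zpowers x).comap (QuotientGroup.map B B σ hB) := zpowers_le.mpr hσx
  refine ⟨(zpowers x).comap (QuotientGroup.mk' B), QuotientGroup.le_comap_mk' B _,
    fun a ha => hinv ha, ?_⟩
  rw [card_comap_mk', Nat.card_zpowers, hx]

theorem exists_le_comap_card_eq_mul [Finite M] (hσ : Function.Involutive σ)
    {B : Subgroup M} (hB : B ≤ B.comap σ) {t : ℕ} (hdvd : Nat.card B * t ∣ Nat.card M) :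
    ∃ B' : Subgroup M, B ≤ B' ∧ B' ≤ B'.comap σ ∧ Nat.card B' = Nat.card B * t := by
  induction t using induction_on_primes generalizing B with
  | zero => exact absurd (Nat.eq_zero_of_zero_dvd (mul_zero (Nat.card B) ▸ hdvd)) Nat.card_pos.ne'
  | one => exact ⟨B, le_rfl, hB, (mul_one _).symm⟩
  | prime_mul p t hp ih =>
    rw [← mul_assoc] at hdvd
    obtain ⟨B₁, hBB₁, hB₁, hcard₁⟩ :=
      exists_le_comap_card_eq_mul_prime hσ hB hp (dvd_of_mul_right_dvd hdvd)
    obtain ⟨B₂, hB₁B₂, hB₂, hcard₂⟩ := ih hB₁ (hcard₁ ▸ hdvd)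
    exact ⟨B₂, hBB₁.trans hB₁B₂, hB₂, by rw [hcard₂, hcard₁, mul_assoc]⟩

end Subgroup

lemma Multiplicative.eq_one_or_eq_ofAdd_one (g : Multiplicative (ZMod 2)) :
    g = 1 ∨ g = ofAdd 1 := by
  revert g; decide

namespace SemidirectProduct
variable {N G : Type*} [Group N] [Group G] {φ : G →* MulAut N}

def leftPreimage (B : Subgroup N) (hB : ∀ g, B ≤ B.comap (φ g).toMonoidHom) :
    Subgroup (N ⋊[φ] G) where
  carrier := {x | x.left ∈ B}
  one_mem' := B.one_mem
  mul_mem' {x _} hx hy := B.mul_mem hx (hB x.right hy)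
  inv_mem' {x} hx := hB x.right⁻¹ (B.inv_mem hx)

variable {B : Subgroup N} {hB : ∀ g, B ≤ B.comap (φ g).toMonoidHom}
  {K : Subgroup (N ⋊[φ] G)}

@[simp]
lemma mem_leftPreimage {x : N ⋊[φ] G} : x ∈ leftPreimage B hB ↔ x.left ∈ B := Iff.rfl

lemma card_leftPreimage : Nat.card (leftPreimage B hB) = Nat.card B * Nat.card G := by
  rw [← Nat.card_prod]
  exact Nat.card_congr ((equivProd.subtypeEquiv fun _ => Iff.rfl).trans
    Equiv.prodSubtypeFstEquivSubtypeProd)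

lemma comap_inl_le_comap (hK : inr.range ≤ K) (g : G) :
    K.comap inl ≤ (K.comap inl).comap (φ g).toMonoidHom := by
  intro b hb
  change inl (φ g b) ∈ K
  rw [inl_aut]
  exact K.mul_mem (K.mul_mem (hK ⟨g, rfl⟩) hb) (hK ⟨g⁻¹, rfl⟩)

lemma leftPreimage_comap_inl (hK : inr.range ≤ K) :
    leftPreimage (K.comap inl) (comap_inl_le_comap hK) = K := by
  ext x
  rw [mem_leftPreimage, Subgroup.mem_comap, ← K.mul_mem_cancel_right (hK ⟨x.right, rfl⟩),
    inl_left_mul_inr_right]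

lemma card_eq_card_comap_inl_mul (hK : inr.range ≤ K) :
    Nat.card K = Nat.card (K.comap inl) * Nat.card G := by
  rw [← card_leftPreimage (hB := comap_inl_le_comap hK), leftPreimage_comap_inl hK]

lemma le_leftPreimage (hK : inr.range ≤ K) (hKB : K.comap inl ≤ B) :
    K ≤ leftPreimage B hB := by
  rw [← leftPreimage_comap_inl hK]
  exact fun _ hx => hKB hx

open Multiplicative in
theorem exists_le_card_eq_of_inr_mem {N : Type*} [CommGroup N] [Finite N]
    {φ : Multiplicative (ZMod 2) →* MulAut N} {H : Subgroup (N ⋊[φ] Multiplicative (ZMod 2))}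
    (hτ : inr (ofAdd 1) ∈ H) {m : ℕ} (hHm : Nat.card H ∣ m)
    (hm : m ∣ Nat.card (N ⋊[φ] Multiplicative (ZMod 2))) :
    ∃ K : Subgroup (N ⋊[φ] Multiplicative (ZMod 2)), H ≤ K ∧ Nat.card K = m := by
  obtain ⟨s, rfl⟩ := hHm
  have hH : inr.range ≤ H := by
    rintro _ ⟨g, rfl⟩
    rcases eq_one_or_eq_ofAdd_one g with rfl | rfl
    · rw [map_one]; exact H.one_mem
    · exact hτ
  have hσ : Function.Involutive (φ (ofAdd 1)).toMonoidHom := fun a => by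
    change (φ (ofAdd 1) * φ (ofAdd 1)) a = a
    rw [← map_mul, show (ofAdd 1 * ofAdd 1 : Multiplicative (ZMod 2)) = 1 by decide, map_one]
    rfl
  rw [card_eq_card_comap_inl_mul hH, SemidirectProduct.card, mul_right_comm] at hm
  obtain ⟨B, hHB, hBσ, hB⟩ := Subgroup.exists_le_comap_card_eq_mul hσ
    (comap_inl_le_comap hH _) (Nat.dvd_of_mul_dvd_mul_right Nat.card_pos hm)
  have hBφ : ∀ g, B ≤ B.comap (φ g).toMonoidHom := by
    intro g
    rcases eq_one_or_eq_ofAdd_one g with rfl | rfl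
    · rw [map_one]; exact fun _ hb => hb
    · exact hBσ
  refine ⟨leftPreimage B hBφ, le_leftPreimage hH hHB, ?_⟩
  rw [card_leftPreimage, hB, card_eq_card_comap_inl_mul hH, mul_right_comm]

end SemidirectProduct

theorem statement_5 (n : ℕ) (hn : 0 < n)
    (H : Subgroup (Multiplicative (ZMod n × ZMod n) ⋊[swapHom n] Multiplicative (ZMod 2)))
    (hτ : SemidirectProduct.inr (Multiplicative.ofAdd (1 : ZMod 2)) ∈ H) :
    { m : ℕ | ∃ K : Subgroup
        (Multiplicative (ZMod n × ZMod n) ⋊[swapHom n] Multiplicative (ZMod 2)),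
        H ≤ K ∧ Nat.card K = m } =
      { m : ℕ | Nat.card H ∣ m ∧
        m ∣ Nat.card (Multiplicative (ZMod n × ZMod n) ⋊[swapHom n] Multiplicative (ZMod 2)) } := by
  have : NeZero n := ⟨hn.ne'⟩
  ext m
  constructor
  · rintro ⟨K, hHK, rfl⟩
    exact ⟨Subgroup.card_dvd_of_le hHK, K.card_subgroup_dvd_card⟩
  · rintro ⟨hHm, hm⟩
    exact SemidirectProduct.exists_le_card_eq_of_inr_mem hτ hHm hm
end

section
/- Let n be a positive integer, A a finite abelian group, and G := ℤ/nℤ ⋊_φ A a semidirect product for some action φ : A → Aut(ℤ/nℤ). If H is a subgroup of G that either contains the subgroup {0} ⋊ A or has trivial projection onto A, then for every positive integer m with |H| dividing m and m dividing |G|, there exists a subgroup K of G with H ≤ K ≤ G and |K| = m; that is, {|K| : H ≤ K ≤ G} is exactly the set of multiples of |H| dividing |G|. -/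
open Subgroup

theorem aux_cyclic_carrier {α : Type*} [Group α] [Finite α] [IsCyclic α] (K : Subgroup α) :
    (K : Set α) = {x | x ^ Nat.card K = 1} := by
  classical
  letI : Fintype α := Fintype.ofFinite α
  have hpos : 0 < Nat.card K := Nat.card_pos
  have hsub : (K : Set α) ⊆ {x | x ^ Nat.card K = 1} := by
    intro x hx
    have h1 : (⟨x, hx⟩ : K) ^ Nat.card K = 1 := pow_card_eq_one'
    show x ^ Nat.card K = 1
    calc x ^ Nat.card K = ((⟨x, hx⟩ ^ Nat.card K : K) : α) := by rw [SubgroupClass.coe_pow]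
      _ = 1 := by rw [h1]; rfl
  refine Set.eq_of_subset_of_ncard_le hsub ?_ (Set.toFinite _)
  have hle := IsCyclic.card_pow_eq_one_le (α := α) hpos
  calc {x : α | x ^ Nat.card K = 1}.ncard
      = ({x : α | x ^ Nat.card K = 1}).toFinset.card := Set.ncard_eq_toFinset_card' _
    _ ≤ Nat.card K := by simpa [Set.toFinset_setOf] using hle
    _ = (K : Set α).ncard := Nat.card_coe_set_eq (K : Set α)

theorem aux_cyclic_le {α : Type*} [Group α] [Finite α] [IsCyclic α] {K K' : Subgroup α}
    (h : Nat.card K ∣ Nat.card K') : K ≤ K' := by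
  intro x hx
  have hx1 : x ^ Nat.card K = 1 := by
    have : x ∈ (K : Set α) := hx
    rwa [aux_cyclic_carrier] at this
  have hx2 : x ^ Nat.card K' = 1 := by
    obtain ⟨c, hc⟩ := h
    rw [hc, pow_mul, hx1, one_pow]
  show x ∈ K'
  rw [← SetLike.mem_coe, aux_cyclic_carrier]
  exact hx2

theorem aux_cyclic_unique {α : Type*} [Group α] [Finite α] [IsCyclic α] {K K' : Subgroup α}
    (h : Nat.card K = Nat.card K') : K = K' :=
  le_antisymm (aux_cyclic_le h.dvd) (aux_cyclic_le h.symm.dvd)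

theorem aux_cyclic_exists {α : Type*} [Group α] [Finite α] [IsCyclic α] {d : ℕ}
    (hd : d ∣ Nat.card α) : ∃ C : Subgroup α, Nat.card C = d := by
  obtain ⟨g, hg⟩ := IsCyclic.exists_ofOrder_eq_natCard (α := α)
  have hα : Nat.card α ≠ 0 := Nat.card_pos.ne'
  refine ⟨Subgroup.zpowers (g ^ (Nat.card α / d)), ?_⟩
  rw [Nat.card_zpowers, orderOf_pow, hg, Nat.gcd_eq_right (Nat.div_dvd_of_dvd hd),
    Nat.div_div_self hd hα]

theorem aux_comm_exists : ∀ (b : ℕ) {A : Type*} [CommGroup A] [Finite A],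
    b ∣ Nat.card A → ∃ B : Subgroup A, Nat.card B = b := by
  intro b
  induction b using Nat.strong_induction_on with
  | _ b ih =>
    intro A _ _ hb
    rcases eq_or_ne b 1 with rfl | hb1
    · exact ⟨⊥, Subgroup.card_bot⟩
    have hb0 : b ≠ 0 := by
      rintro rfl
      exact (Nat.card_pos (α := A)).ne' (Nat.eq_zero_of_zero_dvd hb)
    set p := b.minFac with hpdef
    have hp : p.Prime := Nat.minFac_prime hb1
    haveI : Fact p.Prime := ⟨hp⟩
    have hpb : p ∣ b := Nat.minFac_dvd b
    obtain ⟨a, ha⟩ := exists_prime_orderOf_dvd_card' p (hpb.trans hb)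
    set Z := Subgroup.zpowers a with hZdef
    have hZ : Nat.card Z = p := by rw [hZdef, Nat.card_zpowers, ha]
    have hcard : p * Nat.card (A ⧸ Z) = Nat.card A := by
      rw [← hZ, ← Subgroup.index_eq_card, Subgroup.card_mul_index]
    have hdvd : b / p ∣ Nat.card (A ⧸ Z) := by
      obtain ⟨c, hc⟩ := hb
      refine ⟨c, ?_⟩
      have : p * Nat.card (A ⧸ Z) = p * (b / p * c) := by
        rw [hcard, hc]
        conv_lhs => rw [← Nat.div_mul_cancel hpb]
        ring
      exact Nat.eq_of_mul_eq_mul_left hp.pos this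
    obtain ⟨B', hB'⟩ := ih (b / p) (Nat.div_lt_self (Nat.pos_of_ne_zero hb0) hp.one_lt) hdvd
    refine ⟨B'.comap (QuotientGroup.mk' Z), ?_⟩
    have h1 : (B'.comap (QuotientGroup.mk' Z)).index = B'.index :=
      Subgroup.index_comap_of_surjective _ (QuotientGroup.mk'_surjective Z)
    have h2 := Subgroup.card_mul_index (B'.comap (QuotientGroup.mk' Z))
    have h3 := Subgroup.card_mul_index B'
    have hne : B'.index ≠ 0 := Subgroup.index_ne_zero_of_finite
    rw [h1] at h2
    have : Nat.card (B'.comap (QuotientGroup.mk' Z)) * B'.index = b * B'.index := by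
      rw [h2, ← hcard, ← h3, hB']
      conv_rhs => rw [← Nat.div_mul_cancel hpb]
      ring
    exact Nat.eq_of_mul_eq_mul_right (Nat.pos_of_ne_zero hne) this

open SemidirectProduct in
def sdSub {N G : Type*} [Group N] [Group G] (φ : G →* MulAut N)
    (C : Subgroup N) (B : Subgroup G) (hC : ∀ (a : G), ∀ x ∈ C, φ a x ∈ C) :
    Subgroup (N ⋊[φ] G) where
  carrier := {g | g.left ∈ C ∧ g.right ∈ B}
  one_mem' := ⟨by simpa using C.one_mem, by simpa using B.one_mem⟩
  mul_mem' := by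
    rintro g h ⟨hgl, hgr⟩ ⟨hhl, hhr⟩
    exact ⟨by rw [mul_left]; exact mul_mem hgl (hC _ _ hhl),
      by rw [mul_right]; exact mul_mem hgr hhr⟩
  inv_mem' := by
    rintro g ⟨hl, hr⟩
    exact ⟨by rw [inv_left]; exact hC _ _ (inv_mem hl),
      by rw [inv_right]; exact inv_mem hr⟩

theorem sdSub_card {N G : Type*} [Group N] [Group G] (φ : G →* MulAut N)
    (C : Subgroup N) (B : Subgroup G) (hC : ∀ (a : G), ∀ x ∈ C, φ a x ∈ C) :
    Nat.card (sdSub φ C B hC) = Nat.card C * Nat.card B := by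
  rw [← Nat.card_prod]
  exact Nat.card_congr
    ⟨fun g => (⟨g.1.left, g.2.1⟩, ⟨g.1.right, g.2.2⟩),
     fun p => ⟨⟨p.1.1, p.2.1⟩, p.1.2, p.2.2⟩,
     fun g => rfl, fun p => rfl⟩

theorem sd_card_eq {N G : Type*} [Group N] [Group G] (φ : G →* MulAut N) :
    Nat.card (N ⋊[φ] G) = Nat.card N * Nat.card G := by
  rw [← Nat.card_prod]
  exact Nat.card_congr ⟨fun g => (g.left, g.right), fun p => ⟨p.1, p.2⟩, fun g => rfl, fun p => rfl⟩

open SemidirectProduct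

theorem statement_7 (n : ℕ) (hn : 0 < n) (A : Type*) [CommGroup A] [Finite A]
    (φ : A →* MulAut (Multiplicative (ZMod n)))
    (H : Subgroup (Multiplicative (ZMod n) ⋊[φ] A))
    (hH : (∀ a : A, SemidirectProduct.inr a ∈ H) ∨
      (∀ g ∈ H, SemidirectProduct.rightHom g = (1 : A))) :
    { m : ℕ | ∃ K : Subgroup (Multiplicative (ZMod n) ⋊[φ] A), H ≤ K ∧ Nat.card K = m } =
      { m : ℕ | Nat.card H ∣ m ∧ m ∣ Nat.card (Multiplicative (ZMod n) ⋊[φ] A) } := by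
  haveI : NeZero n := ⟨hn.ne'⟩
  haveI : IsCyclic (Multiplicative (ZMod n)) := isCyclic_multiplicative_iff.mpr inferInstance
  haveI : Finite (Multiplicative (ZMod n) ⋊[φ] A) :=
    Finite.of_equiv _ (⟨fun p => ⟨p.1, p.2⟩, fun g => (g.left, g.right), fun p => rfl, fun g => rfl⟩ :
      (Multiplicative (ZMod n) × A) ≃ (Multiplicative (ZMod n) ⋊[φ] A))
  have hM : Nat.card (Multiplicative (ZMod n)) = n := by
    rw [Nat.card_congr (Multiplicative.toAdd (α := ZMod n)), Nat.card_zmod]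
  have hG : Nat.card (Multiplicative (ZMod n) ⋊[φ] A) = n * Nat.card A := by
    rw [sd_card_eq, hM]
  have hApos : 0 < Nat.card A := Nat.card_pos
  -- invariance of all subgroups of the cyclic group under φ
  have hinv : ∀ (C : Subgroup (Multiplicative (ZMod n))) (a : A),
      ∀ x ∈ C, φ a x ∈ C := by
    intro C a x hx
    have hcard : Nat.card (C.map (φ a).toMonoidHom) = Nat.card C :=
      (Nat.card_congr (C.equivMapOfInjective (φ a).toMonoidHom (φ a).injective).toEquiv).symm
    have heq : C.map (φ a).toMonoidHom = C := aux_cyclic_unique hcard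
    rw [← heq]
    exact ⟨x, hx, rfl⟩
  set D := H.comap (inl : Multiplicative (ZMod n) →* Multiplicative (ZMod n) ⋊[φ] A) with hDdef
  have hDn : Nat.card D ∣ n := by
    have := Subgroup.card_subgroup_dvd_card D; rwa [hM] at this
  ext m
  simp only [Set.mem_setOf_eq]
  constructor
  · rintro ⟨K, hK, rfl⟩
    exact ⟨Subgroup.card_dvd_of_le hK, Subgroup.card_subgroup_dvd_card K⟩
  · rintro ⟨h1, h2⟩
    rw [hG] at h2
    rcases hH with hA | hT
    · -- H contains inr A
      have hDH : ∀ g ∈ H, g.left ∈ D := by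
        intro g hg
        have hgl : inl g.left = g * (inr g.right)⁻¹ :=
          eq_mul_inv_of_mul_eq (inl_left_mul_inr_right g)
        show inl g.left ∈ H
        rw [hgl]
        exact mul_mem hg (inv_mem (hA _))
      have hHcard : Nat.card H = Nat.card D * Nat.card A := by
        rw [← Nat.card_prod]
        refine Nat.card_congr ⟨fun g => (⟨g.1.left, hDH g.1 g.2⟩, g.1.right),
          fun p => ⟨inl p.1.1 * inr p.2, mul_mem p.1.2 (hA p.2)⟩, fun g => ?_, fun p => ?_⟩
        · exact Subtype.ext (inl_left_mul_inr_right g.1)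
        · refine Prod.ext (Subtype.ext ?_) ?_
          · show (inl p.1.1 * inr p.2).left = p.1.1
            simp
          · show (inl p.1.1 * inr p.2).right = p.2
            simp
      have hAm : Nat.card A ∣ m := (Dvd.intro_left _ hHcard.symm).trans h1
      set e := m / Nat.card A with hedef
      have hm : m = e * Nat.card A := (Nat.div_mul_cancel hAm).symm
      have hde : Nat.card D ∣ e := by
        have h1' : Nat.card D * Nat.card A ∣ e * Nat.card A := by
          rw [← hHcard, ← hm]; exact h1
        exact (Nat.mul_dvd_mul_iff_right hApos).mp h1'
      have hen : e ∣ n := by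
        have h2' : e * Nat.card A ∣ n * Nat.card A := by rw [← hm]; exact h2
        exact (Nat.mul_dvd_mul_iff_right hApos).mp h2'
      have heM : e ∣ Nat.card (Multiplicative (ZMod n)) := by rw [hM]; exact hen
      obtain ⟨C, hC⟩ := aux_cyclic_exists (α := Multiplicative (ZMod n)) heM
      refine ⟨sdSub φ C ⊤ (hinv C), ?_, ?_⟩
      · intro g hg
        exact ⟨aux_cyclic_le (by rw [hC]; exact hde) (hDH g hg), Subgroup.mem_top _⟩
      · rw [sdSub_card, hC, Subgroup.card_top, ← hm]
    · -- rightHom trivial on H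
      have hHD : Nat.card H = Nat.card D := by
        refine Nat.card_congr ⟨fun g => ⟨g.1.left, show inl g.1.left ∈ H from ?_⟩,
          fun d => ⟨inl d.1, d.2⟩, fun g => Subtype.ext ?_, fun d => Subtype.ext rfl⟩
        · have : inl g.1.left = g.1 := SemidirectProduct.ext rfl ((hT g.1 g.2).symm)
          rw [this]; exact g.2
        · exact SemidirectProduct.ext rfl ((hT g.1 g.2).symm)
      set c := Nat.gcd m n with hcdef
      have hcm : c ∣ m := Nat.gcd_dvd_left m n
      have hcn : c ∣ n := Nat.gcd_dvd_right m n
      have hcpos : 0 < c := Nat.gcd_pos_of_pos_right m hn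
      have hdc : Nat.card D ∣ c := Nat.dvd_gcd (hHD ▸ h1) hDn
      have hcM : c ∣ Nat.card (Multiplicative (ZMod n)) := by rw [hM]; exact hcn
      obtain ⟨C, hC⟩ := aux_cyclic_exists (α := Multiplicative (ZMod n)) hcM
      have hbA : m / c ∣ Nat.card A := by
        have hco : Nat.Coprime (m / c) (n / c) := Nat.coprime_div_gcd_div_gcd hcpos
        have hmul : m / c * c ∣ n / c * Nat.card A * c := by
          rw [Nat.div_mul_cancel hcm, mul_right_comm, Nat.div_mul_cancel hcn]
          exact h2
        have : m / c ∣ n / c * Nat.card A :=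
          (Nat.mul_dvd_mul_iff_right hcpos).mp hmul
        exact hco.dvd_of_dvd_mul_left this
      obtain ⟨B, hB⟩ := aux_comm_exists (m / c) hbA
      refine ⟨sdSub φ C B (hinv C), ?_, ?_⟩
      · intro g hg
        have hgD : g.left ∈ D := by
          rw [hDdef, Subgroup.mem_comap]
          have heq : inl g.left = g := SemidirectProduct.ext rfl ((hT g hg).symm)
          rw [heq]; exact hg
        refine ⟨aux_cyclic_le (by rw [hC]; exact hdc) hgD, ?_⟩
        show g.right ∈ B
        rw [show g.right = 1 from hT g hg]
        exact B.one_mem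
      · rw [sdSub_card, hC, hB, Nat.mul_div_cancel' hcm]
end

section
/- Let ℓ be an odd prime. The set of indices [N_s(ℓ) : G] over subgroups G of N_s(ℓ) that belong to the split Cartan C_s(ℓ) equals the set of positive integers divisible by 2 and dividing 2(ℓ−1)²/q for some prime q dividing ℓ−1. -/
open Matrix

/-!
Conjugation preserves orders and the scalar matrices form the centre of `GL₂(ℓ)`, so a subgroup
belonging to `C_s(ℓ) ≅ (ℤ/ℓℤ)ˣ × (ℤ/ℓℤ)ˣ` is nontrivial of order dividing `(ℓ - 1)²`. Conversely
every `m ≠ 1` dividing `(ℓ - 1)²` is the order of `H₁ × H₂ ≤ C_s(ℓ)` for subgroups `Hᵢ` of the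
cyclic group `(ℤ/ℓℤ)ˣ`, and this subgroup is not central because one of the `Hᵢ` is nontrivial.
As `|N_s(ℓ)| = 2(ℓ - 1)²`, the indices are the numbers `2(ℓ - 1)²/m`, and `m ≠ 1` is detected by
a prime `q ∣ m`.
-/

theorem IsCyclic.exists_subgroup_card_eq {α : Type*} [Group α] [Finite α] [IsCyclic α] {d : ℕ}
    (hd : d ∣ Nat.card α) : ∃ H : Subgroup α, Nat.card H = d := by
  obtain ⟨g, hg⟩ := IsCyclic.exists_ofOrder_eq_natCard (α := α)
  refine ⟨Subgroup.zpowers (g ^ (Nat.card α / d)), ?_⟩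
  rw [Nat.card_zpowers, orderOf_pow, hg, Nat.gcd_eq_right (Nat.div_dvd_of_dvd hd),
    Nat.div_div_self hd Nat.card_pos.ne']

theorem Subgroup.relIndex_mul_card {G : Type*} [Group G] {H K : Subgroup G} (h : H ≤ K) :
    H.relIndex K * Nat.card H = Nat.card K := by
  rw [mul_comm, ← relIndex_bot_left, ← relIndex_bot_left, relIndex_mul_relIndex _ _ _ bot_le h]

theorem Nat.exists_dvd_sq_ne_one_mul_eq_iff {k n : ℕ} (hk : 0 < k) :
    (∃ m, m ∣ k ^ 2 ∧ m ≠ 1 ∧ n * m = 2 * k ^ 2) ↔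
      0 < n ∧ 2 ∣ n ∧ ∃ q : ℕ, q.Prime ∧ q ∣ k ∧ n ∣ 2 * k ^ 2 / q := by
  have hk2 : 0 < k ^ 2 := by positivity
  constructor
  · rintro ⟨m, ⟨t, ht⟩, hm1, hnm⟩
    have hm0 : 0 < m := Nat.pos_of_ne_zero (by rintro rfl; omega)
    have hn : n = 2 * t := Nat.eq_of_mul_eq_mul_right hm0 (by rw [hnm, ht]; ring)
    have ht0 : 0 < t := Nat.pos_of_ne_zero (by rintro rfl; rw [mul_zero] at ht; omega)
    obtain ⟨q, hq, r, rfl⟩ := Nat.exists_prime_and_dvd hm1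
    have hqk : q ∣ k := hq.dvd_of_dvd_pow (ht ▸ dvd_mul_of_dvd_left (dvd_mul_right q r) t)
    refine ⟨by omega, ⟨t, hn⟩, q, hq, hqk, r, ?_⟩
    rw [ht, hn, show 2 * (q * r * t) = q * (2 * t * r) by ring, Nat.mul_div_cancel_left _ hq.pos]
  · rintro ⟨hn, ⟨t, rfl⟩, q, hq, hqk, s, hs⟩
    obtain ⟨c, hc⟩ : q ∣ k ^ 2 := hqk.trans (Dvd.intro_left _ (sq k).symm)
    rw [hc, show 2 * (q * c) = q * (2 * c) by ring, Nat.mul_div_cancel_left _ hq.pos] at hs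
    have hcts : c = t * s := by linarith
    refine ⟨q * s, ⟨t, by rw [hc, hcts]; ring⟩,
      fun h => hq.ne_one (Nat.eq_one_of_mul_eq_one_right h), ?_⟩
    rw [hc, hcts]; ring

namespace Paper

variable {ℓ : ℕ}

open scoped Pointwise

def diagHom : (ZMod ℓ)ˣ × (ZMod ℓ)ˣ →* GL2 ℓ where
  toFun p := ⟨diagonal ![(p.1 : ZMod ℓ), p.2],
    diagonal ![(p.1⁻¹ : (ZMod ℓ)ˣ), (p.2⁻¹ : (ZMod ℓ)ˣ)],
    by simp [diagonal_mul_diagonal, ← diagonal_one, Fin.forall_fin_two],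
    by simp [diagonal_mul_diagonal, ← diagonal_one, Fin.forall_fin_two]⟩
  map_one' := by ext i j; fin_cases i <;> fin_cases j <;> simp
  map_mul' p q := by ext i j; fin_cases i <;> fin_cases j <;> simp

@[simp]
lemma mat_diagHom (p : (ZMod ℓ)ˣ × (ZMod ℓ)ˣ) :
    mat (diagHom p) = diagonal ![(p.1 : ZMod ℓ), p.2] := rfl

lemma diagHom_injective : Function.Injective (diagHom (ℓ := ℓ)) := by
  intro p q h
  have h' := congrArg mat h
  simp only [mat_diagHom, diagonal_eq_diagonal_iff, Fin.forall_fin_two] at h'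
  exact Prod.ext (Units.ext h'.1) (Units.ext h'.2)

lemma isUnit_mat_det_fin_two {g : GL2 ℓ} :
    IsUnit (mat g 0 0 * mat g 1 1 - mat g 0 1 * mat g 1 0) := by
  rw [← det_fin_two]
  exact (isUnit_iff_isUnit_det _).mp g.isUnit

def splitCartan (ℓ : ℕ) : Subgroup (GL2 ℓ) := (diagHom (ℓ := ℓ)).range

lemma coe_splitCartan : (splitCartan ℓ : Set (GL2 ℓ)) = CsSet ℓ := by
  ext g
  constructor
  · rintro ⟨p, rfl⟩
    simp [CsSet]
  · rintro ⟨h01, h10⟩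
    have hdet := isUnit_mat_det_fin_two (g := g)
    rw [h01, h10, mul_zero, sub_zero] at hdet
    refine ⟨((isUnit_of_mul_isUnit_left hdet).unit, (isUnit_of_mul_isUnit_right hdet).unit), ?_⟩
    refine Units.ext (?_ : mat (diagHom _) = mat g)
    ext i j
    fin_cases i <;> fin_cases j <;> simp [h01, h10]

lemma card_splitCartan [Fact ℓ.Prime] : Nat.card (splitCartan ℓ) = (ℓ - 1) ^ 2 := by
  rw [splitCartan, ← Nat.card_congr (MonoidHom.ofInjective diagHom_injective).toEquiv,
    Nat.card_prod, Nat.card_eq_fintype_card, ZMod.card_units, sq]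

lemma coe_center : ((Subgroup.center (GL2 ℓ)) : Set (GL2 ℓ)) = ZSet ℓ := by
  ext g
  simp [ZSet, mat, GeneralLinearGroup.mem_center_iff_val_mem_range_scalar, smul_one_eq_diagonal,
    eq_comm]

def swapGL : GL2 ℓ :=
  ⟨!![0, 1; 1, 0], !![0, 1; 1, 0], by simp [one_fin_two], by simp [one_fin_two]⟩

lemma antidiagonal_eq_swapGL_smul :
    { g : GL2 ℓ | mat g 0 0 = 0 ∧ mat g 1 1 = 0 } = (swapGL : GL2 ℓ) • CsSet ℓ := by
  ext g
  simp [Set.mem_smul_set_iff_inv_smul_mem, CsSet, mat, swapGL, mul_apply, Fin.sum_univ_two,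
    and_comm]

lemma disjoint_CsSet_antidiagonal [Nontrivial (ZMod ℓ)] :
    Disjoint (CsSet ℓ) { g : GL2 ℓ | mat g 0 0 = 0 ∧ mat g 1 1 = 0 } := by
  rw [Set.disjoint_left]
  rintro g ⟨h01, h10⟩ ⟨h00, h11⟩
  simpa [h00, h01, h10, h11] using isUnit_mat_det_fin_two (g := g)

lemma ncard_NsSet [Fact ℓ.Prime] : (NsSet ℓ).ncard = 2 * (ℓ - 1) ^ 2 := by
  rw [NsSet, Set.ncard_union_eq disjoint_CsSet_antidiagonal, antidiagonal_eq_swapGL_smul,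
    Set.ncard_smul_set, ← coe_splitCartan, ← Nat.card_coe_set_eq, SetLike.coe_sort_coe,
    card_splitCartan, two_mul]

lemma conjSub_ZSet_iff {G : Subgroup (GL2 ℓ)} :
    ConjSub G (ZSet ℓ) ↔ G ≤ Subgroup.center (GL2 ℓ) := by
  simp only [ConjSub, ← coe_center, SetLike.mem_coe]
  refine ⟨fun ⟨a, ha⟩ g hg => ?_, fun h => ⟨1, fun g hg => by simpa using h hg⟩⟩
  simpa [mul_assoc] using Subgroup.Normal.conj_mem inferInstance _ (ha g hg) a⁻¹

lemma card_dvd_of_conjSub_CsSet [Fact ℓ.Prime] {G : Subgroup (GL2 ℓ)}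
    (h : ConjSub G (CsSet ℓ)) : Nat.card G ∣ (ℓ - 1) ^ 2 := by
  obtain ⟨a, ha⟩ := h
  have hle : G.map (MulAut.conj a).toMonoidHom ≤ splitCartan ℓ := by
    rintro _ ⟨g, hg, rfl⟩
    rw [← SetLike.mem_coe, coe_splitCartan]
    exact ha g hg
  rw [← card_splitCartan,
    ← Subgroup.card_map_of_injective (f := (MulAut.conj a).toMonoidHom) (MulAut.conj a).injective]
  exact Subgroup.card_dvd_of_le hle

lemma eq_of_diagHom_mem_center {p : (ZMod ℓ)ˣ × (ZMod ℓ)ˣ}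
    (h : diagHom p ∈ Subgroup.center (GL2 ℓ)) : p.1 = p.2 := by
  obtain ⟨x, hx⟩ := (coe_center (ℓ := ℓ)).subset h
  have h00 := congrFun (congrFun hx 0) 0
  have h11 := congrFun (congrFun hx 1) 1
  simp only [mat_diagHom] at h00 h11
  exact Units.ext (by simp_all)

lemma exists_le_splitCartan_card_eq [Fact ℓ.Prime] {m : ℕ} (hm : m ∣ (ℓ - 1) ^ 2)
    (hm1 : m ≠ 1) :
    ∃ G ≤ splitCartan ℓ, Nat.card G = m ∧ ¬ G ≤ Subgroup.center (GL2 ℓ) := by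
  obtain ⟨m₁, m₂, h₁, h₂, rfl⟩ := Nat.dvd_mul.mp (sq (ℓ - 1) ▸ hm)
  have hcard : Nat.card (ZMod ℓ)ˣ = ℓ - 1 := by rw [Nat.card_eq_fintype_card, ZMod.card_units]
  obtain ⟨H₁, hH₁⟩ := IsCyclic.exists_subgroup_card_eq (hcard ▸ h₁)
  obtain ⟨H₂, hH₂⟩ := IsCyclic.exists_subgroup_card_eq (hcard ▸ h₂)
  refine ⟨(H₁.prod H₂).map diagHom, Subgroup.map_le_range _ _, ?_, fun hZ => hm1 ?_⟩
  · rw [Subgroup.card_map_of_injective diagHom_injective,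
      Nat.card_congr (Subgroup.prodEquiv H₁ H₂).toEquiv, Nat.card_prod, hH₁, hH₂]
  have hdiag (p) (hp : p ∈ H₁.prod H₂) : p.1 = p.2 := eq_of_diagHom_mem_center (hZ ⟨p, hp, rfl⟩)
  have hH₁_bot : H₁ = ⊥ :=
    (Subgroup.eq_bot_iff_forall _).2 fun u hu => hdiag (u, 1) ⟨hu, one_mem _⟩
  have hH₂_bot : H₂ = ⊥ :=
    (Subgroup.eq_bot_iff_forall _).2 fun v hv => (hdiag (1, v) ⟨one_mem _, hv⟩).symm
  rw [← hH₁, ← hH₂, hH₁_bot, hH₂_bot, Subgroup.card_bot]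

lemma belongsCs_of_le_splitCartan {G : Subgroup (GL2 ℓ)} (hG : G ≤ splitCartan ℓ)
    (hZ : ¬ G ≤ Subgroup.center (GL2 ℓ)) : BelongsCs G :=
  ⟨⟨1, fun g hg => by simpa [← coe_splitCartan] using hG hg⟩, by rwa [conjSub_ZSet_iff]⟩

end Paper

theorem statement_9_general (ℓ : ℕ) (hℓ : Nat.Prime ℓ)
    (Ns : Subgroup (GL2 ℓ)) (hNs : (Ns : Set (GL2 ℓ)) = Paper.NsSet ℓ) :
    { n : ℕ | ∃ G : Subgroup (GL2 ℓ), G ≤ Ns ∧ Paper.BelongsCs G ∧ G.relIndex Ns = n } =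
      { n : ℕ | 0 < n ∧ 2 ∣ n ∧
        ∃ q : ℕ, q.Prime ∧ q ∣ (ℓ - 1) ∧ n ∣ 2 * (ℓ - 1) ^ 2 / q } := by
  have := Fact.mk hℓ
  have hcard_Ns : Nat.card Ns = 2 * (ℓ - 1) ^ 2 := by
    rw [← SetLike.coe_sort_coe, Nat.card_coe_set_eq, hNs, Paper.ncard_NsSet]
  have hCs_le_Ns : Paper.splitCartan ℓ ≤ Ns := by
    rw [← SetLike.coe_subset_coe, hNs, Paper.coe_splitCartan]
    exact Set.subset_union_left
  ext n
  rw [Set.mem_ofPred_eq, Set.mem_ofPred_eq,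
    ← Nat.exists_dvd_sq_ne_one_mul_eq_iff (Nat.sub_pos_of_lt hℓ.one_lt), ← hcard_Ns]
  constructor
  · rintro ⟨G, hG, ⟨hCs, hZ⟩, rfl⟩
    refine ⟨Nat.card G, Paper.card_dvd_of_conjSub_CsSet hCs, fun h => hZ ?_,
      Subgroup.relIndex_mul_card hG⟩
    rw [Paper.conjSub_ZSet_iff, Subgroup.card_eq_one.mp h]
    exact bot_le
  · rintro ⟨m, hm, hm1, hnm⟩
    obtain ⟨G, hG, rfl, hZ⟩ := Paper.exists_le_splitCartan_card_eq hm hm1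
    refine ⟨G, hG.trans hCs_le_Ns, Paper.belongsCs_of_le_splitCartan hG hZ, ?_⟩
    exact Nat.eq_of_mul_eq_mul_right Nat.card_pos
      ((Subgroup.relIndex_mul_card (hG.trans hCs_le_Ns)).trans hnm.symm)

theorem statement_9 (ℓ : ℕ) (hℓ : Nat.Prime ℓ) (hodd : Odd ℓ)
    (Ns : Subgroup (GL2 ℓ)) (hNs : (Ns : Set (GL2 ℓ)) = Paper.NsSet ℓ) :
    { n : ℕ | ∃ G : Subgroup (GL2 ℓ), G ≤ Ns ∧ Paper.BelongsCs G ∧ G.relIndex Ns = n } =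
      { n : ℕ | 0 < n ∧ 2 ∣ n ∧
        ∃ q : ℕ, q.Prime ∧ q ∣ (ℓ - 1) ∧ n ∣ 2 * (ℓ - 1) ^ 2 / q } :=
  statement_9_general ℓ hℓ Ns hNs
end

section
/- Let ℓ be an odd prime. The set of indices [N_s(ℓ) : G] over subgroups G of N_s(ℓ) that belong to the nonsplit Cartan C_ns(ℓ) equals the set of positive integers divisible by ℓ−1 and dividing (ℓ−1)²/2^{ν₂(ℓ−1)}, where ν₂ denotes the 2-adic valuation. -/
open Matrix

/-!
An element of `C_ns(ℓ)` has discriminant `tr² - 4 det` equal to `ε` times a square, and the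
discriminant is invariant under conjugation. So if `G ≤ N_s(ℓ)` belongs to `C_ns(ℓ)`, its diagonal
elements are scalars, and it contains an antidiagonal `g₀ = [[0, b], [c, 0]]` with `bc` a
nonsquare. Hence `|G| = 2d` with `d` the order of the scalar part of `G`, which contains the
nonsquare scalar `g₀² = bc`; this forces `e = (ℓ - 1) / d` to be odd, and
`[N_s(ℓ) : G] = 2(ℓ - 1)² / 2d = (ℓ - 1) e`. Conversely, for every odd `e ∣ ℓ - 1`, take a
nonsquare `u` of order `d = (ℓ - 1) / e` and write `u = ε t²`: the cyclic group generated by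
`[[0, u], [1, 0]]` has order `2d` and is conjugated into `C_ns(ℓ)` by `diag(1, t)`.
The integers `(ℓ - 1) e` with `e` an odd divisor of `ℓ - 1` are exactly the multiples of `ℓ - 1`
dividing `(ℓ - 1)² / 2^ν₂(ℓ - 1)`.
-/

theorem Subgroup.card_inf_mul_relIndex {G : Type*} [Group G] (H K : Subgroup G) :
    Nat.card ↥(H ⊓ K) * H.relIndex K = Nat.card K := by
  simpa using Subgroup.relIndex_inf_mul_relIndex ⊥ H K

theorem Subgroup.card_eq_two_mul_card_inf_of_relIndex_eq_two {G : Type*} [Group G]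
    {H K : Subgroup G} (h : H.relIndex K = 2) : Nat.card K = 2 * Nat.card ↥(H ⊓ K) := by
  rw [← H.card_inf_mul_relIndex K, h, mul_comm]

theorem orderOf_eq_two_mul_of_orderOf_sq {M : Type*} [Monoid M] {x : M} {d : ℕ}
    (hd : Even d) (h : orderOf (x ^ 2) = d) : orderOf x = 2 * d := by
  rw [orderOf_pow' x two_ne_zero] at h
  rcases Nat.even_or_odd (orderOf x) with hx | hx
  · rw [Nat.gcd_eq_right (even_iff_two_dvd.mp hx)] at h
    rw [← h, Nat.mul_div_cancel' (even_iff_two_dvd.mp hx)]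
  · rw [(Nat.coprime_two_right.mpr hx).gcd_eq_one, Nat.div_one] at h
    exact absurd (h ▸ hd) (Nat.not_even_iff_odd.mpr hx)

namespace Nat

theorem dvd_div_two_pow_padicValNat_iff {L e : ℕ} (hL : L ≠ 0) :
    e ∣ L / 2 ^ padicValNat 2 L ↔ e ∣ L ∧ Odd e := by
  rw [← factorization_def L prime_two]
  refine ⟨fun h => ⟨h.trans (ordCompl_dvd L 2), Odd.of_dvd_nat ?_ h⟩,
    fun ⟨he, hodd⟩ => dvd_ordCompl_of_dvd_not_dvd he hodd.not_two_dvd_nat⟩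
  exact odd_iff.mpr (two_dvd_ne_zero.mp (not_dvd_ordCompl prime_two hL))

theorem exists_odd_dvd_eq_mul_iff {L n : ℕ} (hL : L ≠ 0) :
    (∃ e, e ∣ L ∧ Odd e ∧ n = L * e) ↔
      0 < n ∧ L ∣ n ∧ n ∣ L ^ 2 / 2 ^ padicValNat 2 L := by
  have hsq : L ^ 2 / 2 ^ padicValNat 2 L = L * (L / 2 ^ padicValNat 2 L) := by
    rw [sq, Nat.mul_div_assoc _ pow_padicValNat_dvd]
  rw [hsq]
  constructor
  · rintro ⟨e, he, hodd, rfl⟩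
    exact ⟨Nat.mul_pos (pos_of_ne_zero hL) hodd.pos, dvd_mul_right L e,
      mul_dvd_mul_left L ((dvd_div_two_pow_padicValNat_iff hL).mpr ⟨he, hodd⟩)⟩
  · rintro ⟨-, ⟨e, rfl⟩, hdvd⟩
    obtain ⟨he, hodd⟩ := (dvd_div_two_pow_padicValNat_iff hL).mp
      ((Nat.mul_dvd_mul_iff_left (pos_of_ne_zero hL)).mp hdvd)
    exact ⟨e, he, hodd, rfl⟩

end Nat

theorem eq_zero_of_sq_eq_mul_sq {K : Type*} [Field K] {ε a b : K} (hε : ¬IsSquare ε)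
    (h : a ^ 2 = ε * b ^ 2) : a = 0 := by
  by_cases hb : b = 0
  · simpa [hb] using h
  · exact absurd ⟨a / b, by field_simp; linear_combination -h⟩ hε

theorem FiniteField.exists_eq_mul_sq_of_not_isSquare {F : Type*} [Field F] [Fintype F]
    [DecidableEq F] {u ε : F} (hu : ¬IsSquare u) (hε : ¬IsSquare ε) :
    ∃ t, u = ε * t ^ 2 := by
  have hε0 : ε ≠ 0 := by rintro rfl; exact hε .zero
  have hχ : quadraticChar F (u * ε) = 1 := by
    rw [map_mul, quadraticChar_neg_one_iff_not_isSquare.mpr hu,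
      quadraticChar_neg_one_iff_not_isSquare.mpr hε]
    norm_num
  obtain ⟨s, hs⟩ := (quadraticChar_one_iff_isSquare
    (mul_ne_zero (by rintro rfl; exact hu .zero) hε0)).mp hχ
  exact ⟨s / ε, by field_simp; linear_combination hs⟩

namespace ZMod

variable {p : ℕ} [Fact p.Prime]

theorem two_ne_zero_of_odd (hp : Odd p) : (2 : ZMod p) ≠ 0 :=
  Ring.two_ne_zero (by rw [ringChar_zmod_n]; rintro rfl; exact Nat.not_odd_iff_even.mpr even_two hp)

theorem natCard_units : Nat.card (ZMod p)ˣ = p - 1 := by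
  rw [Nat.card_eq_fintype_card, card_units]

theorem odd_of_pow_eq_one_of_not_isSquare (hp : Odd p) {x : (ZMod p)ˣ}
    (hx : ¬IsSquare (x : ZMod p)) {d e : ℕ} (hde : d * e = p - 1) (hxd : x ^ d = 1) :
    Odd e := by
  by_contra he
  obtain ⟨k, rfl⟩ := Nat.not_odd_iff_even.mp he
  have hhalf : p / 2 = d * k := by
    have : d * (k + k) = 2 * (d * k) := by ring
    obtain ⟨j, rfl⟩ := hp; omega
  refine hx ((euler_criterion p x.ne_zero).mpr ?_)
  rw [hhalf, ← Units.val_pow_eq_pow_val, pow_mul, hxd, one_pow, Units.val_one]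

theorem exists_orderOf_eq_not_isSquare (hp : Odd p) {d e : ℕ} (hde : d * e = p - 1)
    (he : Odd e) : ∃ u : (ZMod p)ˣ, orderOf u = d ∧ ¬IsSquare (u : ZMod p) := by
  obtain ⟨γ, hγ⟩ := IsCyclic.exists_generator (α := (ZMod p)ˣ)
  have hγord : orderOf γ = p - 1 := by
    rw [orderOf_eq_card_of_forall_mem_zpowers hγ, natCard_units]
  refine ⟨γ ^ e, ?_, fun hsq => ?_⟩
  · rw [orderOf_pow_of_dvd he.pos.ne' ⟨d, by rw [hγord, ← hde, mul_comm]⟩, hγord, ← hde,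
      Nat.mul_div_cancel _ he.pos]
  · have h := (euler_criterion p (γ ^ e).ne_zero).mp hsq
    rw [← Units.val_pow_eq_pow_val, Units.val_eq_one, ← pow_mul,
      ← orderOf_dvd_iff_pow_eq_one, hγord] at h
    have hhalf : p - 1 = p / 2 * 2 := by obtain ⟨j, rfl⟩ := hp; omega
    rw [hhalf, mul_comm e] at h
    have hpos : 0 < p / 2 := by have := (Fact.out : p.Prime).two_le; omega
    exact Nat.not_even_iff_odd.mpr he (even_iff_two_dvd.mpr (Nat.dvd_of_mul_dvd_mul_left hpos h))

end ZMod

namespace Paper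

open Matrix.GeneralLinearGroup

variable {ℓ : ℕ}

def AntidiagSet (ℓ : ℕ) : Set (GL2 ℓ) := { g | mat g 0 0 = 0 ∧ mat g 1 1 = 0 }

@[simp] theorem mat_mul (a b : GL2 ℓ) : mat (a * b) = mat a * mat b := rfl

@[simp] theorem mat_one : mat (1 : GL2 ℓ) = 1 := rfl

theorem mat_conj (a g : GL2 ℓ) : mat (a * g * a⁻¹) = a.val * mat g * a.val⁻¹ := by
  simp only [mat, Units.val_mul, Matrix.coe_units_inv]

theorem discr_eq_mul_sq_of_conj_mem_cnsSet {ε : ZMod ℓ} {a g : GL2 ℓ}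
    (h : a * g * a⁻¹ ∈ CnsSet ℓ ε) : ∃ w, (mat g).discr = ε * w ^ 2 := by
  obtain ⟨x, y, hxy⟩ := h
  refine ⟨2 * y, ?_⟩
  rw [← Matrix.discr_conj a (mat g), ← mat_conj, hxy, Matrix.discr_fin_two,
    Matrix.trace_fin_two_of, Matrix.det_fin_two_of]
  ring

theorem mem_zSet_of_conj_mem_zSet {a g : GL2 ℓ} (h : a * g * a⁻¹ ∈ ZSet ℓ) : g ∈ ZSet ℓ := by
  obtain ⟨x, hx⟩ := h
  refine ⟨x, ?_⟩
  rw [show g = a⁻¹ * (a * g * a⁻¹) * a by group, mat_mul, mat_mul, hx, Matrix.mul_smul,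
    Matrix.mul_one, Matrix.smul_mul, ← mat_mul, inv_mul_cancel, mat_one]

theorem conjSub_zSet_iff (G : Subgroup (GL2 ℓ)) : ConjSub G (ZSet ℓ) ↔ ∀ g ∈ G, g ∈ ZSet ℓ :=
  ⟨fun ⟨_, ha⟩ g hg => mem_zSet_of_conj_mem_zSet (ha g hg),
    fun h => ⟨1, fun g hg => by simpa using h g hg⟩⟩

def diagonalHom : (Fin 2 → (ZMod ℓ)ˣ) →* GL2 ℓ :=
  (Units.map (Matrix.diagonalRingHom (Fin 2) (ZMod ℓ)).toMonoidHom).comp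
    MulEquiv.piUnits.symm.toMonoidHom

theorem mat_diagonalHom (v : Fin 2 → (ZMod ℓ)ˣ) :
    mat (diagonalHom v) = Matrix.diagonal fun i => (v i : ZMod ℓ) := rfl

theorem diagonalHom_injective : Function.Injective (diagonalHom (ℓ := ℓ)) := by
  intro v w h
  funext i
  have := congrArg (fun g => mat g i i) h
  simpa [mat_diagonalHom, Units.ext_iff] using this

theorem mat_scalar (u : (ZMod ℓ)ˣ) :
    mat (scalar (Fin 2) u) = !![(u : ZMod ℓ), 0; 0, u] := by
  rw [mat, coe_scalar, Matrix.scalar_apply, Matrix.diagonal_fin_two]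

theorem scalar_injective : Function.Injective (scalar (Fin 2) : (ZMod ℓ)ˣ →* GL2 ℓ) := by
  intro u v h
  simpa [mat_scalar, Units.ext_iff] using congrArg (fun g => mat g 0 0) h

def cnsSubmonoid (ε : ZMod ℓ) : Submonoid (GL2 ℓ) where
  carrier := CnsSet ℓ ε
  one_mem' := ⟨1, 0, by ext i j; fin_cases i <;> fin_cases j <;> simp⟩
  mul_mem' := by
    rintro a b ⟨x, y, hx⟩ ⟨x', y', hy⟩
    refine ⟨x * x' + ε * y * y', x * y' + y * x', ?_⟩
    rw [mat_mul, hx, hy]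
    ext i j
    fin_cases i <;> fin_cases j <;> simp [Matrix.mul_apply] <;> ring

theorem scalar_mem_zSet (u : (ZMod ℓ)ˣ) : scalar (Fin 2) u ∈ ZSet ℓ :=
  ⟨u, by rw [mat, coe_scalar, Matrix.scalar_apply, Matrix.smul_one_eq_diagonal]⟩

variable [Fact ℓ.Prime]

theorem mul_ne_zero_of_mem_csSet {g : GL2 ℓ} (hg : g ∈ CsSet ℓ) : mat g 0 0 * mat g 1 1 ≠ 0 := by
  have := g.det_ne_zero
  change (mat g).det ≠ 0 at this
  rwa [Matrix.det_fin_two, hg.1, hg.2, mul_zero, sub_zero] at this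

theorem mul_ne_zero_of_mem_antidiagSet {g : GL2 ℓ} (hg : g ∈ AntidiagSet ℓ) :
    mat g 0 1 * mat g 1 0 ≠ 0 := by
  have := g.det_ne_zero
  change (mat g).det ≠ 0 at this
  rw [Matrix.det_fin_two, hg.1, hg.2] at this
  simpa using this

theorem disjoint_csSet_antidiagSet : Disjoint (CsSet ℓ) (AntidiagSet ℓ) :=
  Set.disjoint_left.mpr fun _ hg ha => mul_ne_zero_of_mem_csSet hg (by rw [ha.1, zero_mul])

theorem mul_mem_csSet_iff {a : GL2 ℓ} (ha : a ∈ AntidiagSet ℓ) (b : GL2 ℓ) :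
    b * a ∈ CsSet ℓ ↔ b ∈ AntidiagSet ℓ := by
  have hdet := mul_ne_zero_of_mem_antidiagSet ha
  simp [CsSet, AntidiagSet, Matrix.mul_apply, Fin.sum_univ_two, ha.1, ha.2,
    left_ne_zero_of_mul hdet, right_ne_zero_of_mul hdet]

theorem relIndex_eq_two_of_mem_iff_mem_csSet {H K : Subgroup (GL2 ℓ)}
    (hK : ∀ b ∈ K, b ∈ NsSet ℓ) {a : GL2 ℓ} (haK : a ∈ K) (ha : a ∈ AntidiagSet ℓ)
    (hH : ∀ b ∈ K, b ∈ H ↔ b ∈ CsSet ℓ) : H.relIndex K = 2 := by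
  refine Subgroup.relIndex_eq_two_iff.mpr ⟨a, haK, fun b hb => ?_⟩
  rw [hH _ (mul_mem hb haK), hH b hb, mul_mem_csSet_iff ha]
  rcases hK b hb with h | h
  · exact Or.inr ⟨h, Set.disjoint_left.mp disjoint_csSet_antidiagSet h⟩
  · exact Or.inl ⟨h, Set.disjoint_right.mp disjoint_csSet_antidiagSet h⟩

theorem natCard_range_diagonalHom : Nat.card (diagonalHom (ℓ := ℓ)).range = (ℓ - 1) ^ 2 := by
  rw [← Nat.card_congr (MonoidHom.ofInjective diagonalHom_injective).toEquiv, Nat.card_fun,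
    ZMod.natCard_units, Nat.card_fin]

theorem natCard_range_scalar : Nat.card (scalar (Fin 2) : (ZMod ℓ)ˣ →* GL2 ℓ).range = ℓ - 1 := by
  rw [← Nat.card_congr (MonoidHom.ofInjective scalar_injective).toEquiv, ZMod.natCard_units]

theorem mem_range_diagonalHom_iff {g : GL2 ℓ} : g ∈ (diagonalHom (ℓ := ℓ)).range ↔ g ∈ CsSet ℓ := by
  constructor
  · rintro ⟨v, rfl⟩
    simp [CsSet, mat_diagonalHom]
  · rintro ⟨h01, h10⟩
    have hdet := mul_ne_zero_of_mem_csSet (g := g) ⟨h01, h10⟩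
    refine ⟨![Units.mk0 _ (left_ne_zero_of_mul hdet), Units.mk0 _ (right_ne_zero_of_mul hdet)],
      Units.ext ?_⟩
    change mat _ = mat g
    ext i j
    fin_cases i <;> fin_cases j <;> simp [mat_diagonalHom, h01, h10]

theorem mem_range_scalar_iff {g : GL2 ℓ} :
    g ∈ (scalar (Fin 2) : (ZMod ℓ)ˣ →* GL2 ℓ).range ↔ g ∈ CsSet ℓ ∧ mat g 0 0 = mat g 1 1 := by
  constructor
  · rintro ⟨u, rfl⟩
    simp [CsSet, mat_scalar]
  · rintro ⟨⟨h01, h10⟩, hdiag⟩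
    have hdet := mul_ne_zero_of_mem_csSet (g := g) ⟨h01, h10⟩
    refine ⟨Units.mk0 _ (left_ne_zero_of_mul hdet), Units.ext ?_⟩
    change mat _ = mat g
    ext i j
    fin_cases i <;> fin_cases j <;> simp [mat_scalar, h01, h10, hdiag]

noncomputable def antidiagGL (u : (ZMod ℓ)ˣ) : GL2 ℓ :=
  mkOfDetNeZero !![0, (u : ZMod ℓ); 1, 0] (by simp [Matrix.det_fin_two])

theorem mat_antidiagGL (u : (ZMod ℓ)ˣ) : mat (antidiagGL u) = !![0, (u : ZMod ℓ); 1, 0] :=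
  rfl

theorem antidiagGL_mem_antidiagSet (u : (ZMod ℓ)ˣ) : antidiagGL u ∈ AntidiagSet ℓ := by
  simp [AntidiagSet, mat_antidiagGL]

theorem natCard_of_coe_eq_nsSet {Ns : Subgroup (GL2 ℓ)} (hNs : (Ns : Set (GL2 ℓ)) = NsSet ℓ) :
    Nat.card Ns = 2 * (ℓ - 1) ^ 2 := by
  have hle : diagonalHom.range ≤ Ns := fun g hg =>
    (Set.ext_iff.mp hNs g).mpr (Or.inl (mem_range_diagonalHom_iff.mp hg))
  have hrel : diagonalHom.range.relIndex Ns = 2 :=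
    relIndex_eq_two_of_mem_iff_mem_csSet (fun b hb => (Set.ext_iff.mp hNs b).mp hb)
      ((Set.ext_iff.mp hNs _).mpr (Or.inr (antidiagGL_mem_antidiagSet 1)))
      (antidiagGL_mem_antidiagSet 1) (fun _ _ => mem_range_diagonalHom_iff)
  rw [Subgroup.card_eq_two_mul_card_inf_of_relIndex_eq_two hrel, inf_of_le_left hle,
    natCard_range_diagonalHom]

theorem relIndex_eq_of_natCard_eq {Ns G : Subgroup (GL2 ℓ)} (hNs : (Ns : Set (GL2 ℓ)) = NsSet ℓ)
    (hle : G ≤ Ns) {d e : ℕ} (hG : Nat.card G = 2 * d) (hde : d * e = ℓ - 1) :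
    G.relIndex Ns = (ℓ - 1) * e := by
  have hd : 0 < 2 * d := by
    have := (Fact.out : ℓ.Prime).two_le
    rcases Nat.eq_zero_or_pos d with rfl | h <;> omega
  have h := G.card_inf_mul_relIndex Ns
  rw [inf_of_le_left hle, hG, natCard_of_coe_eq_nsSet hNs, ← hde] at h
  exact Nat.eq_of_mul_eq_mul_left hd (by rw [h, ← hde]; ring)

theorem eq_of_conj_mem_cnsSet_of_mem_csSet {ε : ZMod ℓ} (hε : ¬IsSquare ε) {a g : GL2 ℓ}
    (hconj : a * g * a⁻¹ ∈ CnsSet ℓ ε) (hg : g ∈ CsSet ℓ) : mat g 0 0 = mat g 1 1 := by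
  obtain ⟨w, hw⟩ := discr_eq_mul_sq_of_conj_mem_cnsSet hconj
  rw [Matrix.discr_fin_two, Matrix.trace_fin_two, Matrix.det_fin_two, hg.1, hg.2] at hw
  exact sub_eq_zero.mp (eq_zero_of_sq_eq_mul_sq (b := w) hε (by linear_combination hw))

theorem not_isSquare_of_conj_mem_cnsSet_of_mem_antidiagSet (hodd : Odd ℓ) {ε : ZMod ℓ}
    (hε : ¬IsSquare ε) {a g : GL2 ℓ} (hconj : a * g * a⁻¹ ∈ CnsSet ℓ ε)
    (hg : g ∈ AntidiagSet ℓ) : ¬IsSquare (mat g 0 1 * mat g 1 0) := by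
  rintro ⟨r, hr⟩
  obtain ⟨w, hw⟩ := discr_eq_mul_sq_of_conj_mem_cnsSet hconj
  rw [Matrix.discr_fin_two, Matrix.trace_fin_two, Matrix.det_fin_two, hg.1, hg.2] at hw
  have h2r : 2 * r = 0 := eq_zero_of_sq_eq_mul_sq (b := w) hε (by linear_combination hw - 4 * hr)
  have hr0 : r = 0 := (mul_eq_zero.mp h2r).resolve_left (ZMod.two_ne_zero_of_odd hodd)
  exact mul_ne_zero_of_mem_antidiagSet hg (by rw [hr, hr0, mul_zero])

theorem sq_eq_scalar_of_mem_antidiagSet {g : GL2 ℓ} (hg : g ∈ AntidiagSet ℓ) :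
    g ^ 2 = scalar (Fin 2) (Units.mk0 _ (mul_ne_zero_of_mem_antidiagSet hg)) := by
  rw [sq]
  refine Units.ext ?_
  change mat (g * g) = mat (scalar (Fin 2) _)
  rw [mat_mul, mat_scalar]
  ext i j
  fin_cases i <;> fin_cases j <;> simp [Matrix.mul_apply, hg.1, hg.2, mul_comm]

theorem exists_natCard_eq_of_belongsCns (hodd : Odd ℓ) {ε : ZMod ℓ} (hε : ¬IsSquare ε)
    {Ns G : Subgroup (GL2 ℓ)} (hNs : (Ns : Set (GL2 ℓ)) = NsSet ℓ) (hle : G ≤ Ns)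
    (hG : BelongsCns ε G) : ∃ d e, d * e = ℓ - 1 ∧ Odd e ∧ Nat.card G = 2 * d := by
  obtain ⟨⟨a, ha⟩, hnotZ⟩ := hG
  set Z := (scalar (Fin 2) : (ZMod ℓ)ˣ →* GL2 ℓ).range
  have hNsG : ∀ b ∈ G, b ∈ NsSet ℓ := fun b hb => (Set.ext_iff.mp hNs b).mp (hle hb)
  have hZ : ∀ b ∈ G, b ∈ Z ↔ b ∈ CsSet ℓ := fun b hb => by
    rw [mem_range_scalar_iff]
    exact ⟨And.left, fun h => ⟨h, eq_of_conj_mem_cnsSet_of_mem_csSet hε (ha b hb) h⟩⟩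
  obtain ⟨g₀, hg₀G, hg₀⟩ : ∃ g ∈ G, g ∈ AntidiagSet ℓ := by
    by_contra! h
    refine hnotZ ((conjSub_zSet_iff G).mpr fun b hb => ?_)
    obtain ⟨u, rfl⟩ := (hZ b hb).mpr ((hNsG b hb).resolve_right (h b hb))
    exact scalar_mem_zSet u
  obtain ⟨e, he⟩ : Nat.card ↥(Z ⊓ G) ∣ ℓ - 1 :=
    natCard_range_scalar (ℓ := ℓ) ▸ Subgroup.card_dvd_of_le inf_le_left
  refine ⟨Nat.card ↥(Z ⊓ G), e, he.symm, ?_, Subgroup.card_eq_two_mul_card_inf_of_relIndex_eq_two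
    (relIndex_eq_two_of_mem_iff_mem_csSet hNsG hg₀G hg₀ hZ)⟩
  -- `g₀ ^ 2` is a nonsquare scalar lying in `Z ⊓ G`.
  have hsq := sq_eq_scalar_of_mem_antidiagSet hg₀
  refine ZMod.odd_of_pow_eq_one_of_not_isSquare hodd
    (x := Units.mk0 _ (mul_ne_zero_of_mem_antidiagSet hg₀))
    (not_isSquare_of_conj_mem_cnsSet_of_mem_antidiagSet hodd hε (ha g₀ hg₀G) hg₀) he.symm ?_
  rw [← orderOf_dvd_iff_pow_eq_one, ← orderOf_injective _ scalar_injective, ← hsq]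
  exact Subgroup.orderOf_dvd_natCard _ ⟨⟨_, hsq.symm⟩, pow_mem hg₀G 2⟩

theorem conjSub_zpowers_antidiagGL_cnsSet {ε t : ZMod ℓ} {u : (ZMod ℓ)ˣ} (ht0 : t ≠ 0)
    (ht : (u : ZMod ℓ) = ε * t ^ 2) :
    ConjSub (Subgroup.zpowers (antidiagGL u)) (CnsSet ℓ ε) := by
  set P : GL2 ℓ := mkOfDetNeZero !![1, 0; 0, t] (by simpa [Matrix.det_fin_two])
  have hinv : (!![1, 0; 0, t])⁻¹ = !![1, 0; 0, t⁻¹] :=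
    Matrix.inv_eq_right_inv (by ext i j; fin_cases i <;> fin_cases j <;> simp [ht0])
  have hconj : P * antidiagGL u * P⁻¹ ∈ CnsSet ℓ ε := by
    refine ⟨0, t, ?_⟩
    rw [mat_conj]
    change !![1, 0; 0, t] * _ * (!![1, 0; 0, t])⁻¹ = _
    rw [hinv, mat_antidiagGL, ht]
    ext i j
    fin_cases i <;> fin_cases j <;> simp [Matrix.mul_apply]
    field_simp
  refine ⟨P, fun g hg => ?_⟩
  obtain ⟨n, rfl⟩ := mem_powers_iff_mem_zpowers.mpr hg
  rw [← conj_pow]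
  exact pow_mem (S := cnsSubmonoid ε) hconj n

theorem antidiagGL_not_mem_zSet (u : (ZMod ℓ)ˣ) : antidiagGL u ∉ ZSet ℓ := fun ⟨x, hx⟩ => by
  simpa [mat_antidiagGL] using congrArg (· 1 0) hx

theorem orderOf_antidiagGL {u : (ZMod ℓ)ˣ} (hu : Even (orderOf u)) :
    orderOf (antidiagGL u) = 2 * orderOf u := by
  refine orderOf_eq_two_mul_of_orderOf_sq hu ?_
  rw [sq_eq_scalar_of_mem_antidiagSet (antidiagGL_mem_antidiagSet u),
    orderOf_injective _ scalar_injective]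
  congr 1
  ext
  simp [mat_antidiagGL]

theorem exists_belongsCns_natCard_eq (hodd : Odd ℓ) {ε : ZMod ℓ} (hε : ¬IsSquare ε)
    {Ns : Subgroup (GL2 ℓ)} (hNs : (Ns : Set (GL2 ℓ)) = NsSet ℓ) {d e : ℕ}
    (hde : d * e = ℓ - 1) (he : Odd e) :
    ∃ G ≤ Ns, BelongsCns ε G ∧ Nat.card G = 2 * d := by
  obtain ⟨u, hud, hu⟩ := ZMod.exists_orderOf_eq_not_isSquare hodd hde he
  obtain ⟨t, ht⟩ := FiniteField.exists_eq_mul_sq_of_not_isSquare hu hε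
  have ht0 : t ≠ 0 := by rintro rfl; simp at ht
  have hd : Even d := by
    have h := Nat.Odd.sub_odd hodd odd_one
    rw [← hde, Nat.even_mul] at h
    exact h.resolve_right (Nat.not_even_iff_odd.mpr he)
  refine ⟨Subgroup.zpowers (antidiagGL u), Subgroup.zpowers_le.mpr
    ((Set.ext_iff.mp hNs _).mpr (Or.inr (antidiagGL_mem_antidiagSet u))),
    ⟨conjSub_zpowers_antidiagGL_cnsSet ht0 ht, fun h => antidiagGL_not_mem_zSet u
      ((conjSub_zSet_iff _).mp h _ (Subgroup.mem_zpowers _))⟩, ?_⟩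
  rw [Nat.card_zpowers, orderOf_antidiagGL (hud ▸ hd), hud]

end Paper

theorem statement_10 (ℓ : ℕ) (hℓ : Nat.Prime ℓ) (hodd : Odd ℓ) (ε : ZMod ℓ)
    (hε : ∀ t : ZMod ℓ, t ^ 2 ≠ ε)
    (Ns : Subgroup (GL2 ℓ)) (hNs : (Ns : Set (GL2 ℓ)) = Paper.NsSet ℓ) :
    { n : ℕ | ∃ G : Subgroup (GL2 ℓ), G ≤ Ns ∧ Paper.BelongsCns ε G ∧ G.relIndex Ns = n } =
      { n : ℕ | 0 < n ∧ (ℓ - 1) ∣ n ∧ n ∣ (ℓ - 1) ^ 2 / 2 ^ (padicValNat 2 (ℓ - 1)) } := by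
  have : Fact ℓ.Prime := ⟨hℓ⟩
  have hε' : ¬IsSquare ε := fun ⟨r, hr⟩ => hε r (by rw [sq, hr])
  have hL : ℓ - 1 ≠ 0 := by have := hℓ.two_le; omega
  ext n
  refine Iff.trans ?_ (Nat.exists_odd_dvd_eq_mul_iff hL)
  constructor
  · rintro ⟨G, hle, hG, rfl⟩
    obtain ⟨d, e, hde, he, hcard⟩ := Paper.exists_natCard_eq_of_belongsCns hodd hε' hNs hle hG
    exact ⟨e, Dvd.intro_left d hde, he, Paper.relIndex_eq_of_natCard_eq hNs hle hcard hde⟩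
  · rintro ⟨e, ⟨d, hd⟩, he, rfl⟩
    have hde : d * e = ℓ - 1 := by rw [hd, mul_comm]
    obtain ⟨G, hle, hG, hcard⟩ := Paper.exists_belongsCns_natCard_eq hodd hε' hNs hde he
    exact ⟨G, hle, hG, Paper.relIndex_eq_of_natCard_eq hNs hle hcard hde⟩
end
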